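/- arXiv:2109.07189 — 10 statements merged into one kernel-verified Lean document; each statement's English description precedes it below -/
import Mathlib

section
/- Let L be a finite uniquely atomistic lattice and let x, y ∈ L be distinct elements, with x = sup S₁ and y = sup S₂ their unique decompositions as joins of sets of atoms S₁ and S₂. Then the meet x ⊓ y equals sup (S₁ ∩ S₂), i.e., the unique set of atoms whose join is x ⊓ y is S₁ ∩ S₂. -/
/-!
An atom `a` below `S.sup id` can be added to `S` without changing the join, so uniqueness of the
decomposition forces `a ∈ S`. Hence the decomposition of `x ⊓ y` lies in both `S₁` and `S₂`, which
gives `x ⊓ y ≤ (S₁ ∩ S₂).sup id`; the reverse inequality is monotonicity of `Finset.sup`.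
-/

section UniquelyAtomistic

variable {α : Type*} [Lattice α] [OrderBot α] [DecidableEq α]

theorem mem_of_isAtom_of_le_sup
    (hua : ∀ x : α, ∃! S : Finset α, (∀ a ∈ S, IsAtom a) ∧ x = S.sup id)
    {S : Finset α} (hS : ∀ a ∈ S, IsAtom a) {a : α} (ha : IsAtom a)
    (hle : a ≤ S.sup id) : a ∈ S := by
  have hinsert : insert a S = S :=
    (hua (S.sup id)).unique
      ⟨(Finset.forall_mem_insert a S IsAtom).mpr ⟨ha, hS⟩,
        by rw [Finset.sup_insert, id, sup_eq_right.mpr hle]⟩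
      ⟨hS, rfl⟩
  exact hinsert ▸ Finset.mem_insert_self a S

theorem subset_of_sup_le_sup
    (hua : ∀ x : α, ∃! S : Finset α, (∀ a ∈ S, IsAtom a) ∧ x = S.sup id)
    {S T : Finset α} (hS : ∀ a ∈ S, IsAtom a) (hT : ∀ a ∈ T, IsAtom a)
    (hle : T.sup id ≤ S.sup id) : T ⊆ S := fun a haT =>
  mem_of_isAtom_of_le_sup hua hS (hT a haT) ((Finset.le_sup (f := id) haT).trans hle)

end UniquelyAtomistic

theorem meet_eq_sup_inter_of_uniquelyAtomistic_general
    {α : Type*} [Lattice α] [OrderBot α] [DecidableEq α]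
    (hua : ∀ x : α, ∃! S : Finset α, (∀ a ∈ S, IsAtom a) ∧ x = S.sup id)
    (x y : α) (S₁ S₂ : Finset α)
    (hS₁atoms : ∀ a ∈ S₁, IsAtom a) (hxS₁ : x = S₁.sup id)
    (hS₂atoms : ∀ a ∈ S₂, IsAtom a) (hyS₂ : y = S₂.sup id) :
    x ⊓ y = (S₁ ∩ S₂).sup id := by
  obtain ⟨T, ⟨hT, hxyT⟩, -⟩ := hua (x ⊓ y)
  have hT₁ : T ⊆ S₁ := subset_of_sup_le_sup hua hS₁atoms hT (hxyT ▸ hxS₁ ▸ inf_le_left)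
  have hT₂ : T ⊆ S₂ := subset_of_sup_le_sup hua hS₂atoms hT (hxyT ▸ hyS₂ ▸ inf_le_right)
  apply le_antisymm
  · exact hxyT ▸ Finset.sup_mono (Finset.subset_inter hT₁ hT₂)
  · rw [hxS₁, hyS₂]
    exact le_inf (Finset.sup_mono Finset.inter_subset_left)
      (Finset.sup_mono Finset.inter_subset_right)

/-- In a finite uniquely atomistic lattice, if `x = sup S₁` and `y = sup S₂`
are the unique decompositions of distinct elements `x ≠ y` as joins of sets of atoms,
then `x ⊓ y = sup (S₁ ∩ S₂)`. -/
theorem meet_eq_sup_inter_of_uniquelyAtomistic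
    {α : Type*} [Lattice α] [OrderBot α] [Fintype α] [DecidableEq α]
    (hua : ∀ x : α, ∃! S : Finset α, (∀ a ∈ S, IsAtom a) ∧ x = S.sup id)
    (x y : α) (hxy : x ≠ y) (S₁ S₂ : Finset α)
    (hS₁atoms : ∀ a ∈ S₁, IsAtom a) (hxS₁ : x = S₁.sup id)
    (hS₂atoms : ∀ a ∈ S₂, IsAtom a) (hyS₂ : y = S₂.sup id) :
    x ⊓ y = (S₁ ∩ S₂).sup id :=
  meet_eq_sup_inter_of_uniquelyAtomistic_general hua x y S₁ S₂ hS₁atoms hxS₁ hS₂atoms hyS₂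
end

section
/- Let L be a finite uniquely atomistic lattice and let x = sup S and y = sup T be elements of L with their unique decompositions as joins of sets of atoms S and T. If x < y (x is strictly less than y), then S is a proper subset of T. -/
/-! If `S` and `T` are sets of atoms with `sup S ≤ sup T`, then `S ∪ T` is another set of atoms
with join `sup T`, so uniqueness of the decomposition of `sup T` forces `S ∪ T = T`. -/

theorem Finset.subset_of_sup_le_of_existsUnique {α : Type*} [Lattice α] [OrderBot α]
    {S T : Finset α} (huniq : ∃! U : Finset α, (∀ a ∈ U, IsAtom a) ∧ T.sup id = U.sup id)
    (hS : ∀ a ∈ S, IsAtom a) (hT : ∀ a ∈ T, IsAtom a) (hle : S.sup id ≤ T.sup id) :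
    S ⊆ T := by
  classical
  have hunion : S ∪ T = T :=
    huniq.unique
      ⟨fun a ha => (Finset.mem_union.mp ha).elim (hS a) (hT a),
        by rw [Finset.sup_union, sup_eq_right.mpr hle]⟩
      ⟨hT, rfl⟩
  exact Finset.union_eq_right.mp hunion

theorem ssubset_of_lt_of_uniquelyAtomistic_general
    {α : Type*} [Lattice α] [OrderBot α]
    (hua : ∀ x : α, ∃! S : Finset α, (∀ a ∈ S, IsAtom a) ∧ x = S.sup id)
    (x y : α) (S T : Finset α)
    (hSatoms : ∀ a ∈ S, IsAtom a) (hxS : x = S.sup id)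
    (hTatoms : ∀ a ∈ T, IsAtom a) (hyT : y = T.sup id)
    (hlt : x < y) :
    S ⊂ T := by
  have hsub : S ⊆ T :=
    Finset.subset_of_sup_le_of_existsUnique (hua _) hSatoms hTatoms (hxS ▸ hyT ▸ hlt.le)
  refine Finset.ssubset_iff_subset_ne.mpr ⟨hsub, ?_⟩
  rintro rfl
  exact hlt.ne (hxS.trans hyT.symm)

/-- In a finite uniquely atomistic lattice, if `x = sup S` and `y = sup T`
are the unique decompositions as joins of sets of atoms and `x < y`, then `S ⊂ T`. -/
theorem ssubset_of_lt_of_uniquelyAtomistic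
    {α : Type*} [Lattice α] [OrderBot α] [Fintype α]
    (hua : ∀ x : α, ∃! S : Finset α, (∀ a ∈ S, IsAtom a) ∧ x = S.sup id)
    (x y : α) (S T : Finset α)
    (hSatoms : ∀ a ∈ S, IsAtom a) (hxS : x = S.sup id)
    (hTatoms : ∀ a ∈ T, IsAtom a) (hyT : y = T.sup id)
    (hlt : x < y) :
    S ⊂ T :=
  ssubset_of_lt_of_uniquelyAtomistic_general hua x y S T hSatoms hxS hTatoms hyT hlt
end

section
/- Every finite uniquely atomistic lattice is modular. -/
/-!
Sending an element to its unique set of atoms turns joins into unions (by uniqueness) and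
meets into intersections (the atoms of `x` are exactly the atoms below `x`), and it reflects
the order. So the lattice embeds into a powerset lattice, hence is distributive, and
distributive lattices are modular.
-/

def IsUniquelyAtomistic (α : Type*) [Lattice α] [OrderBot α] : Prop :=
  ∀ x : α, ∃! S : Finset α, (∀ a ∈ S, IsAtom a) ∧ x = S.sup id

namespace IsUniquelyAtomistic

variable {α : Type*} [Lattice α] [OrderBot α] (h : IsUniquelyAtomistic α)
include h

noncomputable def atoms (x : α) : Finset α := (h x).exists.choose

theorem isAtom_of_mem_atoms {x a : α} (ha : a ∈ h.atoms x) : IsAtom a :=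
  (h x).exists.choose_spec.1 a ha

theorem sup_atoms (x : α) : (h.atoms x).sup id = x :=
  (h x).exists.choose_spec.2.symm

theorem atoms_eq {x : α} {S : Finset α} (hS : ∀ a ∈ S, IsAtom a) (hx : x = S.sup id) :
    h.atoms x = S :=
  (h x).unique (h x).exists.choose_spec ⟨hS, hx⟩

theorem atoms_sup [DecidableEq α] (x y : α) : h.atoms (x ⊔ y) = h.atoms x ∪ h.atoms y := by
  refine h.atoms_eq (fun a ha => ?_) ?_
  · rcases Finset.mem_union.mp ha with ha | ha <;> exact h.isAtom_of_mem_atoms ha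
  · rw [Finset.sup_union, h.sup_atoms, h.sup_atoms]

theorem mem_atoms_iff {x a : α} : a ∈ h.atoms x ↔ IsAtom a ∧ a ≤ x := by
  classical
  refine ⟨fun ha => ⟨h.isAtom_of_mem_atoms ha, ?_⟩, fun ⟨ha, hax⟩ => ?_⟩
  · simpa only [h.sup_atoms, id] using Finset.le_sup (f := id) ha
  · have atoms_atom : h.atoms a = {a} := h.atoms_eq (by simpa using ha) (by simp)
    rw [← sup_eq_right.mpr hax, h.atoms_sup, atoms_atom]
    exact Finset.mem_union_left _ (Finset.mem_singleton_self a)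

theorem atoms_inf [DecidableEq α] (x y : α) : h.atoms (x ⊓ y) = h.atoms x ∩ h.atoms y := by
  ext a
  simp only [Finset.mem_inter, h.mem_atoms_iff, le_inf_iff]
  tauto

theorem atoms_subset_atoms_iff {x y : α} : h.atoms x ⊆ h.atoms y ↔ x ≤ y := by
  refine ⟨fun hxy => ?_, fun hxy a ha => ?_⟩
  · rw [← h.sup_atoms x, ← h.sup_atoms y]
    exact Finset.sup_mono hxy
  · rw [h.mem_atoms_iff] at ha ⊢
    exact ⟨ha.1, ha.2.trans hxy⟩

theorem inf_sup_le (x y z : α) : x ⊓ (y ⊔ z) ≤ x ⊓ y ⊔ x ⊓ z := by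
  classical
  rw [← h.atoms_subset_atoms_iff, h.atoms_sup, h.atoms_inf, h.atoms_inf, h.atoms_inf,
    h.atoms_sup, Finset.inter_union_distrib_left]

end IsUniquelyAtomistic

theorem modular_of_uniquelyAtomistic_general
    {α : Type*} [Lattice α] [OrderBot α]
    (hua : ∀ x : α, ∃! S : Finset α, (∀ a ∈ S, IsAtom a) ∧ x = S.sup id) :
    ∀ x y z : α, x ≤ z → x ⊔ (y ⊓ z) = (x ⊔ y) ⊓ z := by
  let _ : DistribLattice α := .ofInfSupLe (IsUniquelyAtomistic.inf_sup_le hua)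
  exact fun x y z hxz => (sup_inf_assoc_of_le y hxz).symm

/-- Every finite uniquely atomistic lattice is modular: for all `x y z`,
`x ≤ z` implies `x ⊔ (y ⊓ z) = (x ⊔ y) ⊓ z`. -/
theorem modular_of_uniquelyAtomistic
    {α : Type*} [Lattice α] [OrderBot α] [Fintype α]
    (hua : ∀ x : α, ∃! S : Finset α, (∀ a ∈ S, IsAtom a) ∧ x = S.sup id) :
    ∀ x y z : α, x ≤ z → x ⊔ (y ⊓ z) = (x ⊔ y) ⊓ z :=
  modular_of_uniquelyAtomistic_general hua
end

section
/- Let L be a finite modular lattice of height n and let M be a distributive sublattice of L. Then the number of atoms of M (atoms of M as a lattice in its own right) is at most n. Moreover, the number of atoms of M equals n if and only if every atom of M is also an atom of L and the greatest element of L is the join of the atoms of M. -/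
/-!
Distinct atoms of the distributive sublattice `M` meet in its bottom `m₀`, and distributivity
propagates this: an atom of `M` meets the join of `m₀` with any set of other atoms in `m₀`.
Adding the atoms one at a time therefore gives a strict chain of length `#atoms` above `m₀`,
so `#atoms ≤ n`, and with equality `m₀ = ⊥`, the atoms join to `⊤`, and starting the chain at
an atom `a` shows that `a` has height one in `L`. Conversely, modularity makes `x ⋖ x ⊔ a` for
an atom `a ≰ x`, and in a modular lattice a cover raises the height by at most one, so a join of
`k` atoms of `L` has height at most `k`.
-/

/-- The set of atoms of a sublattice `M` (as a lattice in its own right) having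
least element `m₀`: elements of `M` covering `m₀` within `M`. -/
def atomsOfSublattice {α : Type*} [Preorder α] (M : Set α) (m₀ : α) : Set α :=
  {a | a ∈ M ∧ m₀ < a ∧ ∀ b ∈ M, m₀ < b → ¬ b < a}

open Order Finset

section ModularHeight

variable {α : Type*} [Lattice α] [WellFoundedLT α]

theorem height_le_height_add_one_of_covBy [IsLowerModularLattice α] {x y : α} (hxy : x ⋖ y) :
    height y ≤ height x + 1 := by
  induction y using WellFoundedLT.induction generalizing x with
  | _ y ih =>
  rw [height_eq_iSup_lt_height y]
  refine iSup₂_le fun w hwy => add_le_add_left ?_ 1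
  by_cases hwx : w ≤ x
  · exact height_mono hwx
  have hxw : ¬ x ≤ w := fun hxw => hxy.2 (lt_of_le_of_ne hxw fun h => hwx h.ge) hwy
  have hsup : x ⊔ w = y :=
    (hxy.eq_or_eq le_sup_left (sup_le hxy.le hwy.le)).resolve_left fun h =>
      hwx (h ▸ le_sup_right)
  calc height w ≤ height (x ⊓ w) + 1 :=
        ih w hwy (inf_covBy_of_covBy_sup_left (hsup ▸ hxy))
    _ ≤ height x := height_add_one_le (inf_lt_left.2 hxw)

theorem height_sup_le_height_add_one_of_isAtom [OrderBot α] [IsModularLattice α] {a : α}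
    (ha : IsAtom a) (x : α) : height (x ⊔ a) ≤ height x + 1 := by
  by_cases hax : a ≤ x
  · rw [sup_eq_left.2 hax]
    exact le_self_add
  · have hinf : x ⊓ a = ⊥ := disjoint_iff.1 (ha.not_le_iff_disjoint.1 hax).symm
    exact height_le_height_add_one_of_covBy
      (covBy_sup_of_inf_covBy_right (hinf ▸ bot_covBy_iff.2 ha))

theorem height_finsetSup_le_card [OrderBot α] [IsModularLattice α] {s : Finset α}
    (hs : ∀ a ∈ s, IsAtom a) : height (s.sup id) ≤ #s := by
  induction s using Finset.cons_induction with
  | empty => simp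
  | cons a s has ih =>
    rw [sup_cons, card_cons, sup_comm, Nat.cast_succ]
    calc height (s.sup id ⊔ id a) ≤ height (s.sup id) + 1 :=
          height_sup_le_height_add_one_of_isAtom (hs a (mem_cons_self a s)) _
      _ ≤ #s + 1 := by grw [ih fun b hb => hs b (mem_cons_of_mem hb)]

end ModularHeight

theorem isAtom_of_height_le_one {α : Type*} [PartialOrder α] [OrderBot α] {a : α}
    (ha : a ≠ ⊥) (h : height a ≤ 1) : IsAtom a := by
  refine ⟨ha, fun b hb => ?_⟩
  have hb0 : height b = 0 := Order.lt_one_iff.1 (height_le_coe_iff.1 h b hb)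
  exact (height_eq_zero.1 hb0).eq_bot

section DistribSublattice

variable {α : Type*} [Lattice α] {M : Set α} {m₀ : α}

theorem inf_sup_left_of_mem (hmeet : ∀ x ∈ M, ∀ y ∈ M, x ⊓ y ∈ M)
    (hdist : ∀ x ∈ M, ∀ y ∈ M, ∀ z ∈ M, x ⊔ (y ⊓ z) = (x ⊔ y) ⊓ (x ⊔ z))
    {x y z : α} (hx : x ∈ M) (hy : y ∈ M) (hz : z ∈ M) :
    x ⊓ (y ⊔ z) = x ⊓ y ⊔ x ⊓ z := by
  symm
  calc x ⊓ y ⊔ x ⊓ z = (x ⊓ y ⊔ x) ⊓ (x ⊓ y ⊔ z) := hdist _ (hmeet x hx y hy) x hx z hz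
    _ = x ⊓ (z ⊔ x ⊓ y) := by rw [sup_eq_right.2 inf_le_left, sup_comm]
    _ = x ⊓ ((z ⊔ x) ⊓ (z ⊔ y)) := by rw [hdist z hz x hx y hy]
    _ = x ⊓ (y ⊔ z) := by rw [← inf_assoc, inf_eq_left.2 (le_sup_right : x ≤ z ⊔ x), sup_comm]

theorem inf_eq_of_mem_atomsOfSublattice (hmeet : ∀ x ∈ M, ∀ y ∈ M, x ⊓ y ∈ M) {a b : α}
    (ha : a ∈ atomsOfSublattice M m₀) (hb : b ∈ atomsOfSublattice M m₀) (hab : a ≠ b) :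
    a ⊓ b = m₀ := by
  by_contra hne
  have hlt : m₀ < a ⊓ b := lt_of_le_of_ne (le_inf ha.2.1.le hb.2.1.le) (Ne.symm hne)
  have hle : a ≤ b :=
    inf_eq_left.1 (eq_of_le_of_not_lt inf_le_left (ha.2.2 _ (hmeet a ha.1 b hb.1) hlt))
  exact hb.2.2 a ha.1 ha.2.1 (lt_of_le_of_ne hle hab)

theorem height_add_card_le_height_sup [OrderBot α] (hjoin : ∀ x ∈ M, ∀ y ∈ M, x ⊔ y ∈ M)
    (hmeet : ∀ x ∈ M, ∀ y ∈ M, x ⊓ y ∈ M)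
    (hdist : ∀ x ∈ M, ∀ y ∈ M, ∀ z ∈ M, x ⊔ (y ⊓ z) = (x ⊔ y) ⊓ (x ⊔ z))
    {x : α} (hx : x ∈ M) {s : Finset α} (hs : ↑s ⊆ atomsOfSublattice M m₀)
    (hsx : ∀ a ∈ s, a ⊓ x = m₀) : height x + #s ≤ height (x ⊔ s.sup id) := by
  induction s using Finset.cons_induction generalizing x with
  | empty => simp
  | cons t s hts ih =>
    have ht : t ∈ atomsOfSublattice M m₀ := hs (mem_cons_self t s)
    have hsA : ↑s ⊆ atomsOfSublattice M m₀ := fun a ha => hs (mem_cons_of_mem ha)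
    have hxt : x < x ⊔ t := left_lt_sup.2 fun htx =>
      ht.2.1.ne' (by rw [← hsx t (mem_cons_self t s), inf_eq_left.2 htx])
    have hsxt : ∀ a ∈ s, a ⊓ (x ⊔ t) = m₀ := fun a ha => by
      rw [inf_sup_left_of_mem hmeet hdist (hsA ha).1 hx ht.1, hsx a (mem_cons_of_mem ha),
        inf_eq_of_mem_atomsOfSublattice hmeet (hsA ha) ht (ne_of_mem_of_not_mem ha hts),
        sup_idem]
    calc height x + #(cons t s hts) = height x + 1 + #s := by
          rw [card_cons, Nat.cast_succ, add_assoc, add_comm (#s : ℕ∞)]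
      _ ≤ height (x ⊔ t) + #s := by grw [height_add_one_le hxt]
      _ ≤ height (x ⊔ t ⊔ s.sup id) := ih (hjoin x hx t ht.1) hsA hsxt
      _ = height (x ⊔ (cons t s hts).sup id) := by rw [sup_cons, id, sup_assoc]

theorem isAtom_of_height_top_le_card [BoundedOrder α] (hjoin : ∀ x ∈ M, ∀ y ∈ M, x ⊔ y ∈ M)
    (hmeet : ∀ x ∈ M, ∀ y ∈ M, x ⊓ y ∈ M)
    (hdist : ∀ x ∈ M, ∀ y ∈ M, ∀ z ∈ M, x ⊔ (y ⊓ z) = (x ⊔ y) ⊓ (x ⊔ z))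
    (hbot : m₀ = ⊥) {s : Finset α} (hs : ↑s ⊆ atomsOfSublattice M m₀)
    (htop : height (⊤ : α) ≤ #s) {a : α} (ha : a ∈ s) : IsAtom a := by
  classical
  have hA : a ∈ atomsOfSublattice M m₀ := hs ha
  have hchain : height a + #(s.erase a) ≤ 1 + #(s.erase a) := by
    calc height a + #(s.erase a) ≤ height (a ⊔ (s.erase a).sup id) :=
          height_add_card_le_height_sup hjoin hmeet hdist hA.1
            ((coe_subset.2 (erase_subset a s)).trans hs) fun b hb =>
              inf_eq_of_mem_atomsOfSublattice hmeet (hs (mem_of_mem_erase hb)) hA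
                (ne_of_mem_erase hb)
      _ ≤ #s := (height_mono le_top).trans htop
      _ = 1 + #(s.erase a) := by rw [← card_erase_add_one ha]; push_cast; ring
  exact isAtom_of_height_le_one (hbot ▸ hA.2.1).ne'
    ((ENat.add_le_add_iff_right (ENat.natCast_ne_top _)).1 hchain)

end DistribSublattice

/-- Let `L` be a finite modular lattice of height `n` and `M` a
distributive sublattice of `L` with least element `m₀`.  Then the number of atoms of
`M` is at most `n`; moreover it equals `n` iff every atom of `M` is an atom of `L`
and the greatest element of `L` is the join (least upper bound) of the atoms of `M`. -/
theorem card_atoms_distrib_sublattice_of_modular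
    {α : Type*} [Lattice α] [Fintype α] [BoundedOrder α] [IsModularLattice α]
    (n : ℕ) (hht : Order.height (⊤ : α) = n)
    (M : Set α)
    (hjoin : ∀ x ∈ M, ∀ y ∈ M, x ⊔ y ∈ M)
    (hmeet : ∀ x ∈ M, ∀ y ∈ M, x ⊓ y ∈ M)
    (hdist : ∀ x ∈ M, ∀ y ∈ M, ∀ z ∈ M, x ⊔ (y ⊓ z) = (x ⊔ y) ⊓ (x ⊔ z))
    (m₀ : α) (hm₀ : IsLeast M m₀) :
    (atomsOfSublattice M m₀).ncard ≤ n ∧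
      ((atomsOfSublattice M m₀).ncard = n ↔
        (∀ a ∈ atomsOfSublattice M m₀, IsAtom a) ∧
          IsLUB (atomsOfSublattice M m₀) ⊤) := by
  classical
  obtain ⟨s, hs⟩ := (atomsOfSublattice M m₀).toFinite.exists_finset_coe
  rw [← hs, Set.ncard_coe_finset]
  have hle_n (x : α) : height x ≤ n := hht ▸ height_mono le_top
  have hbase : height m₀ + #s ≤ height (m₀ ⊔ s.sup id) :=
    height_add_card_le_height_sup hjoin hmeet hdist hm₀.1 hs.le
      fun a ha => inf_eq_right.2 (hs.le ha).2.1.le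
  have hcard : #s ≤ n := by exact_mod_cast le_add_self.trans (hbase.trans (hle_n _))
  refine ⟨hcard, fun hsn => ?_, fun ⟨hatoms, hlub⟩ => ?_⟩
  · rw [hsn] at hbase
    have hbot : m₀ = ⊥ := by
      have h : height m₀ + n ≤ 0 + n := by rw [zero_add]; exact hbase.trans (hle_n _)
      exact (height_eq_zero.1 (nonpos_iff_eq_zero.1
        ((ENat.add_le_add_iff_right (ENat.natCast_ne_top n)).1 h))).eq_bot
    rw [hbot, bot_sup_eq, height_bot, zero_add] at hbase
    have htop : s.sup id = ⊤ := by
      by_contra hne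
      exact (height_strictMono (lt_top_iff_ne_top.2 hne) ((hle_n _).trans_lt
        (ENat.natCast_lt_top n))).not_ge (hht ▸ hbase)
    exact ⟨fun a ha => isAtom_of_height_top_le_card hjoin hmeet hdist hbot hs.le
      (by rw [hht, hsn]) ha, htop ▸ isLUB_sup_id⟩
  · have hn : height (s.sup id) ≤ #s := height_finsetSup_le_card hatoms
    rw [isLUB_sup_id.unique hlub, hht] at hn
    exact le_antisymm hcard (by exact_mod_cast hn)
end

section
/- (Unique-decomposition Theorem) A finite atomistic lattice is distributive if and only if it is uniquely atomistic. -/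
/-!
In a distributive lattice every atom is sup-prime, so an atom below the join of a set of atoms
belongs to that set; hence two sets of atoms with the same join coincide.

Conversely, if decompositions into atoms are unique, the decomposition `A x` of `x` contains every
atom below `x` (adding such an atom does not change the join). So `A` sends `⊓` to `∩` and, by
uniqueness, `⊔` to `∪`; being injective, it embeds the lattice into the distributive lattice of
finite sets.
-/

section

variable {α : Type*}

def Finset.IsAtomDecomposition [Lattice α] [OrderBot α] (S : Finset α) (x : α) : Prop :=
  (∀ a ∈ S, IsAtom a) ∧ x = S.sup id

theorem IsAtom.supIrred [Lattice α] [OrderBot α] {a : α} (ha : IsAtom a) : SupIrred a := by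
  refine ⟨fun hmin => ha.1 (isMin_iff_eq_bot.mp hmin), fun b c hbc => ?_⟩
  rcases ha.le_iff.mp (hbc ▸ le_sup_left : b ≤ a) with rfl | hb
  · exact Or.inr (by simpa using hbc)
  · exact Or.inl hb

section DistribLattice

variable [DistribLattice α] [OrderBot α]

theorem IsAtom.mem_of_le_finset_sup {a : α} {S : Finset α} (ha : IsAtom a)
    (hS : ∀ b ∈ S, IsAtom b) (h : a ≤ S.sup id) : a ∈ S := by
  obtain ⟨b, hbS, hab⟩ := ha.supIrred.supPrime.le_finset_sup.mp h
  rcases (hS b hbS).le_iff.mp hab with hbot | rfl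
  · exact absurd hbot ha.1
  · exact hbS

theorem Finset.IsAtomDecomposition.subset {S T : Finset α} {x : α}
    (hS : S.IsAtomDecomposition x) (hT : T.IsAtomDecomposition x) : S ⊆ T := fun a ha =>
  (hS.1 a ha).mem_of_le_finset_sup hT.1 <| hT.2 ▸ hS.2 ▸ Finset.le_sup (f := id) ha

theorem Finset.IsAtomDecomposition.unique {S T : Finset α} {x : α}
    (hS : S.IsAtomDecomposition x) (hT : T.IsAtomDecomposition x) : S = T :=
  (hS.subset hT).antisymm (hT.subset hS)

end DistribLattice

section UniqueDecomposition

variable [Lattice α] [OrderBot α]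

theorem Finset.IsAtomDecomposition.union [DecidableEq α] {S T : Finset α} {x y : α}
    (hS : S.IsAtomDecomposition x) (hT : T.IsAtomDecomposition y) :
    (S ∪ T).IsAtomDecomposition (x ⊔ y) :=
  ⟨fun a ha => (Finset.mem_union.mp ha).elim (hS.1 a) (hT.1 a), by
    rw [Finset.sup_union, ← hS.2, ← hT.2]⟩

theorem Finset.IsAtomDecomposition.insert [DecidableEq α] {S : Finset α} {x a : α}
    (hS : S.IsAtomDecomposition x) (ha : IsAtom a) (hax : a ≤ x) :
    (insert a S).IsAtomDecomposition x :=
  ⟨Finset.forall_mem_insert _ _ _ |>.mpr ⟨ha, hS.1⟩, by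
    rw [Finset.sup_insert, ← hS.2, id, sup_eq_right.mpr hax]⟩

variable {A : α → Finset α}

theorem mem_atomDecomposition_iff (hA : ∀ x, (A x).IsAtomDecomposition x)
    (hAu : ∀ x (S : Finset α), S.IsAtomDecomposition x → S = A x) {x a : α} :
    a ∈ A x ↔ IsAtom a ∧ a ≤ x := by
  classical
  refine ⟨fun ha => ⟨(hA x).1 a ha, (hA x).2 ▸ Finset.le_sup (f := id) ha⟩, fun ⟨ha, hax⟩ => ?_⟩
  rw [← hAu x _ ((hA x).insert ha hax)]
  exact Finset.mem_insert_self a _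

theorem atomDecomposition_sup [DecidableEq α] (hA : ∀ x, (A x).IsAtomDecomposition x)
    (hAu : ∀ x (S : Finset α), S.IsAtomDecomposition x → S = A x) (x y : α) :
    A (x ⊔ y) = A x ∪ A y :=
  (hAu _ _ ((hA x).union (hA y))).symm

theorem atomDecomposition_inf [DecidableEq α] (hA : ∀ x, (A x).IsAtomDecomposition x)
    (hAu : ∀ x (S : Finset α), S.IsAtomDecomposition x → S = A x) (x y : α) :
    A (x ⊓ y) = A x ∩ A y := by
  ext a
  simp only [Finset.mem_inter, mem_atomDecomposition_iff hA hAu, le_inf_iff]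
  tauto

theorem atomDecomposition_injective (hA : ∀ x, (A x).IsAtomDecomposition x) :
    Function.Injective A := fun x y hxy => by
  rw [(hA x).2, (hA y).2, hxy]

end UniqueDecomposition

theorem sup_inf_left_of_injective [Lattice α] {β : Type*} [DistribLattice β] {f : α → β}
    (hf : Function.Injective f) (map_sup : ∀ x y, f (x ⊔ y) = f x ⊔ f y)
    (map_inf : ∀ x y, f (x ⊓ y) = f x ⊓ f y) (x y z : α) :
    x ⊔ (y ⊓ z) = (x ⊔ y) ⊓ (x ⊔ z) :=
  hf <| by rw [map_sup, map_inf, map_inf, map_sup, map_sup, sup_inf_left]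

end

theorem distributive_iff_uniquelyAtomistic_general
    {α : Type*} [Lattice α] [OrderBot α]
    (hatomistic : ∀ x : α, ∃ S : Finset α, (∀ a ∈ S, IsAtom a) ∧ x = S.sup id) :
    (∀ x y z : α, x ⊔ (y ⊓ z) = (x ⊔ y) ⊓ (x ⊔ z)) ↔
      (∀ x : α, ∃! S : Finset α, (∀ a ∈ S, IsAtom a) ∧ x = S.sup id) := by
  classical
  constructor
  · intro hd x
    let _ : DistribLattice α := { ‹Lattice α› with le_sup_inf := fun x y z => (hd x y z).ge }
    obtain ⟨S, hS⟩ := hatomistic x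
    exact ⟨S, hS, fun T hT => Finset.IsAtomDecomposition.unique hT hS⟩
  · intro hu
    choose A hA hAu using hu
    exact sup_inf_left_of_injective (atomDecomposition_injective hA)
      (atomDecomposition_sup hA hAu) (atomDecomposition_inf hA hAu)

/-- Unique-decomposition Theorem: A finite atomistic lattice is
distributive if and only if it is uniquely atomistic. -/
theorem distributive_iff_uniquelyAtomistic
    {α : Type*} [Lattice α] [OrderBot α] [Fintype α]
    (hatomistic : ∀ x : α, ∃ S : Finset α, (∀ a ∈ S, IsAtom a) ∧ x = S.sup id) :
    (∀ x y z : α, x ⊔ (y ⊓ z) = (x ⊔ y) ⊓ (x ⊔ z)) ↔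
      (∀ x : α, ∃! S : Finset α, (∀ a ∈ S, IsAtom a) ∧ x = S.sup id) :=
  distributive_iff_uniquelyAtomistic_general hatomistic
end

section
/- Let L be a finite geometric lattice of height n and let M be a distributive sublattice of L. Then the cardinality of M is at most 2^n. -/
private lemma aux_distrib_card {α : Type*} [Lattice α] [Fintype α] :
    ∀ (n : ℕ) (M : Set α),
    (∀ x ∈ M, ∀ y ∈ M, x ⊔ y ∈ M) →
    (∀ x ∈ M, ∀ y ∈ M, x ⊓ y ∈ M) →
    (∀ x ∈ M, ∀ y ∈ M, ∀ z ∈ M, x ⊔ (y ⊓ z) = (x ⊔ y) ⊓ (x ⊔ z)) →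
    (∀ l : List α, (∀ x ∈ l, x ∈ M) → l.Chain' (· < ·) → l.length ≤ n + 1) →
    M.ncard ≤ 2 ^ n := by
  intro n
  induction n with
  | zero =>
    intro M hjoin hmeet hdist hchain
    have hsub : M.Subsingleton := by
      intro x hx y hy
      have hs : x ⊔ y ∈ M := hjoin x hx y hy
      have hxle : x ≤ x ⊔ y := le_sup_left
      have hyle : y ≤ y ⊔ x := le_sup_left
      have hx2 : x = x ⊔ y := by
        by_contra h
        have hlt : x < x ⊔ y := lt_of_le_of_ne hxle h
        have := hchain [x, x ⊔ y] (by intro z hz; simp at hz; rcases hz with rfl | rfl <;> assumption)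
          (List.isChain_pair.mpr hlt)
        simp at this
      have hy2 : y = x ⊔ y := by
        by_contra h
        have hlt : y < x ⊔ y := lt_of_le_of_ne le_sup_right h
        have := hchain [y, x ⊔ y] (by intro z hz; simp at hz; rcases hz with rfl | rfl <;> assumption)
          (List.isChain_pair.mpr hlt)
        simp at this
      exact hx2.trans hy2.symm
    calc M.ncard ≤ 1 := by
          rcases hsub.eq_empty_or_singleton with rfl | ⟨x, rfl⟩ <;> simp
      _ ≤ 2 ^ 0 := by norm_num
  | succ n ih =>
    intro M hjoin hmeet hdist hchain
    rcases M.eq_empty_or_nonempty with rfl | hne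
    · simp
    have hMfin : M.Finite := Set.toFinite M
    -- the bottom element of M
    have hne' : hMfin.toFinset.Nonempty := by rwa [Set.Finite.toFinset_nonempty]
    set b : α := hMfin.toFinset.inf' hne' id with hb
    have hbM : b ∈ M := by
      have := Finset.inf'_mem M hmeet hMfin.toFinset hne' id
        (fun x hx => by simpa [Set.Finite.mem_toFinset] using hx)
      exact this
    have hble : ∀ x ∈ M, b ≤ x := fun x hx =>
      Finset.inf'_le id (by simpa [Set.Finite.mem_toFinset] using hx)
    by_cases hMb : M = {b}
    · rw [hMb]; simp [Nat.one_le_two_pow]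
    -- an atom a of M
    have hDfin : (M \ {b}).Finite := Set.toFinite _
    have hsne : hDfin.toFinset.Nonempty := by
      rw [Set.Finite.toFinset_nonempty]
      rcases Set.exists_of_ssubset (h := (Set.singleton_subset_iff.mpr hbM).ssubset_of_ne
        (by exact fun h => hMb h.symm)) with ⟨x, hx1, hx2⟩
      exact ⟨x, hx1, by simpa using hx2⟩
    obtain ⟨a, haS, hamin⟩ : ∃ a ∈ hDfin.toFinset, ∀ x ∈ hDfin.toFinset, ¬ x < a := by
      obtain ⟨a, ha⟩ := Finset.exists_minimal hsne
      exact ⟨a, ha.1, fun x hx hlt => lt_irrefl _ (lt_of_lt_of_le hlt (ha.2 hx hlt.le))⟩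
    rw [Set.Finite.mem_toFinset, Set.mem_diff, Set.mem_singleton_iff] at haS
    obtain ⟨haM, hab⟩ := haS
    have hatom : ∀ x ∈ M, x < a → x = b := by
      intro x hx hlt
      by_contra h
      exact hamin x (by rw [Set.Finite.mem_toFinset]; exact ⟨hx, h⟩) hlt
    have hblta : b < a := lt_of_le_of_ne (hble a haM) (Ne.symm hab)
    set U : Set α := {x ∈ M | a ≤ x} with hU
    set D : Set α := {x ∈ M | ¬ a ≤ x} with hD
    -- U satisfies the induction hypothesis with n
    have hUcard : U.ncard ≤ 2 ^ n := by
      apply ih U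
      · intro x hx y hy; exact ⟨hjoin x hx.1 y hy.1, le_trans hx.2 le_sup_left⟩
      · intro x hx y hy; exact ⟨hmeet x hx.1 y hy.1, le_inf hx.2 hy.2⟩
      · intro x hx y hy z hz; exact hdist x hx.1 y hy.1 z hz.1
      · intro l hl hlc
        have hblt : ∀ x ∈ U, b < x := by
          intro x hx
          exact lt_of_lt_of_le hblta hx.2
        have hchain' := hchain (b :: l)
          (by intro x hx
              rcases List.mem_cons.mp hx with rfl | hx
              · exact hbM
              · exact (hl x hx).1)
          (by rw [List.Chain', List.isChain_cons]
              refine ⟨fun h hh => ?_, hlc⟩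
              have hhl : h ∈ l := List.mem_of_mem_head? hh
              exact hblt h (hl h hhl)
              )
        simpa using Nat.le_of_succ_le_succ (by simpa using hchain')
    -- D injects into U
    have hDcard : D.ncard ≤ U.ncard := by
      apply Set.ncard_le_ncard_of_injOn (fun x => x ⊔ a)
      · intro x hx
        exact ⟨hjoin x hx.1 a haM, le_sup_right⟩
      · intro x hx y hy hxy
        have hax : a ⊓ x = b := by
          have h1 : a ⊓ x ∈ M := hmeet a haM x hx.1
          have h2 : a ⊓ x < a := lt_of_le_of_ne inf_le_left
            (fun h => hx.2 (h ▸ inf_le_right))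
          exact hatom _ h1 h2
        have hay : a ⊓ y = b := by
          have h1 : a ⊓ y ∈ M := hmeet a haM y hy.1
          have h2 : a ⊓ y < a := lt_of_le_of_ne inf_le_left
            (fun h => hy.2 (h ▸ inf_le_right))
          exact hatom _ h1 h2
        simp only at hxy
        have hx' : x = (x ⊔ a) ⊓ (x ⊔ y) := by
          have := hdist x hx.1 a haM y hy.1
          rw [hay] at this
          rw [← this, sup_eq_left.mpr (hble x hx.1)]
        have hy' : y = (y ⊔ a) ⊓ (y ⊔ x) := by
          have := hdist y hy.1 a haM x hx.1
          rw [hax] at this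
          rw [← this, sup_eq_left.mpr (hble y hy.1)]
        have : (x ⊔ a) ⊓ (x ⊔ y) = (y ⊔ a) ⊓ (y ⊔ x) := by rw [hxy, sup_comm x y]
        exact hx'.trans (this.trans hy'.symm)
    have hsplit : M.ncard = U.ncard + D.ncard := by
      have : M = U ∪ D := by
        ext x
        constructor
        · intro hx
          by_cases h : a ≤ x
          · exact Or.inl ⟨hx, h⟩
          · exact Or.inr ⟨hx, h⟩
        · rintro (hx | hx) <;> exact hx.1
      rw [this, Set.ncard_union_eq _ (Set.toFinite U) (Set.toFinite D)]
      rw [Set.disjoint_left]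
      intro x hx hx'
      exact hx'.2 hx.2
    calc M.ncard = U.ncard + D.ncard := hsplit
      _ ≤ 2 ^ n + 2 ^ n := Nat.add_le_add hUcard (le_trans hDcard hUcard)
      _ = 2 ^ (n + 1) := by ring

/-- A distributive sublattice `M` of a finite geometric lattice of
height `n` has cardinality at most `2 ^ n`. -/
theorem card_distrib_sublattice_le_of_geometric
    {α : Type*} [Lattice α] [Fintype α] [BoundedOrder α]
    (hsemi : ∀ x y : α, x ⊓ y ⋖ x → x ⊓ y ⋖ y → (x ⋖ x ⊔ y ∧ y ⋖ x ⊔ y))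
    (hatomistic : ∀ x : α, ∃ S : Finset α, (∀ a ∈ S, IsAtom a) ∧ x = S.sup id)
    (n : ℕ) (hht : Order.height (⊤ : α) = n)
    (M : Set α)
    (hjoin : ∀ x ∈ M, ∀ y ∈ M, x ⊔ y ∈ M)
    (hmeet : ∀ x ∈ M, ∀ y ∈ M, x ⊓ y ∈ M)
    (hdist : ∀ x ∈ M, ∀ y ∈ M, ∀ z ∈ M, x ⊔ (y ⊓ z) = (x ⊔ y) ⊓ (x ⊔ z)) :
    M.ncard ≤ 2 ^ n := by
  apply aux_distrib_card n M hjoin hmeet hdist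
  intro l hl hlc
  rcases List.eq_nil_or_concat l with rfl | hne
  · simp
  have hne' : l ≠ [] := by rcases hne with ⟨L, x, rfl⟩; simp
  set p : LTSeries α := RelSeries.fromListIsChain l hne' hlc with hp
  have hlen : p.length = l.length - 1 := rfl
  have h1 : (p.length : ℕ∞) ≤ Order.height p.last := Order.length_le_height_last
  have h2 : Order.height p.last ≤ Order.height (⊤ : α) := Order.height_mono le_top
  rw [hht] at h2
  have h3 : (p.length : ℕ∞) ≤ (n : ℕ∞) := le_trans h1 h2
  have h4 : p.length ≤ n := by exact_mod_cast h3
  rw [hlen] at h4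
  have hpos : 0 < l.length := List.length_pos_iff.mpr hne'
  omega
end

section
/- Let M be an atomistic distributive sublattice of a finite geometric lattice of height n, and for 0 ≤ k ≤ n let W_k(M) denote the number of elements of M of height k, where height is computed within the lattice M. Then W_k(M) ≤ binomial(n, k) for all k ∈ {0, 1, …, n}, and equality holds (for all k) if and only if M contains exactly n atoms. -/
/-- The `k`-th Whitney number of the sublattice `M`: the number of elements of `M`
whose height, computed within the induced order on `M`, equals `k`. -/
noncomputable def whitneyNumber {α : Type*} [Preorder α] (M : Set α) (k : ℕ) : ℕ :=
  {x : M | Order.height x = (k : ℕ∞)}.ncard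

lemma myFinsetHeightEqCard {β : Type*} (s : Finset β) :
    Order.height s = (s.card : ℕ∞) := by
  classical
  apply le_antisymm
  · calc Order.height s ≤ Order.height s.card :=
          Order.height_le_height_apply_of_strictMono _ (fun a b h => Finset.card_lt_card h) s
      _ = s.card := by simp
  · induction s using Finset.strongInduction with
    | _ s ih =>
      rcases s.eq_empty_or_nonempty with rfl | ⟨a, ha⟩
      · simp
      · have hsub : s.erase a ⊂ s := Finset.erase_ssubset ha
        have h1 : ((s.erase a).card : ℕ∞) ≤ Order.height (s.erase a) := ih _ hsub
        have h2 : Order.height (s.erase a) + 1 ≤ Order.height s := by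
          rw [Order.height_eq_iSup_lt_height s]
          exact le_iSup₂_of_le (s.erase a) hsub le_rfl
        have hc : (s.card : ℕ∞) = ((s.erase a).card : ℕ∞) + 1 := by
          rw [Finset.card_erase_of_mem ha]
          have hpos : 1 ≤ s.card := Finset.card_pos.mpr ⟨a, ha⟩
          exact_mod_cast (Nat.succ_pred_eq_of_pos hpos).symm
        rw [hc]
        exact le_trans (add_le_add h1 le_rfl) h2

lemma myOrderIsoHeight {β γ : Type*} [Preorder β] [Preorder γ] (e : β ≃o γ) (x : β) :
    Order.height (e x) = Order.height x := by
  apply le_antisymm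
  · simpa using Order.height_le_height_apply_of_strictMono _ e.symm.strictMono (e x)
  · exact Order.height_le_height_apply_of_strictMono _ e.strictMono x

/-- Let `M` be an atomistic distributive sublattice of a finite
geometric lattice of height `n`.  Then `W_k(M) ≤ n.choose k` for all `0 ≤ k ≤ n`,
with equality (for all such `k`) iff `M` contains exactly `n` atoms. -/
theorem whitney_numbers_of_distrib_sublattice
    {α : Type*} [Lattice α] [Fintype α] [BoundedOrder α]
    (hsemi : ∀ x y : α, x ⊓ y ⋖ x → x ⊓ y ⋖ y → (x ⋖ x ⊔ y ∧ y ⋖ x ⊔ y))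
    (hatomistic : ∀ x : α, ∃ S : Finset α, (∀ a ∈ S, IsAtom a) ∧ x = S.sup id)
    (n : ℕ) (hht : Order.height (⊤ : α) = n)
    (M : Set α)
    (hjoin : ∀ x ∈ M, ∀ y ∈ M, x ⊔ y ∈ M)
    (hmeet : ∀ x ∈ M, ∀ y ∈ M, x ⊓ y ∈ M)
    (hdist : ∀ x ∈ M, ∀ y ∈ M, ∀ z ∈ M, x ⊔ (y ⊓ z) = (x ⊔ y) ⊓ (x ⊔ z))
    (m₀ : α) (hm₀ : IsLeast M m₀)
    (hMatomistic : ∀ x ∈ M, ∃ S : Finset α,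
      (∀ a ∈ S, a ∈ atomsOfSublattice M m₀) ∧ x = m₀ ⊔ S.sup id) :
    (∀ k ≤ n, whitneyNumber M k ≤ n.choose k) ∧
      ((∀ k ≤ n, whitneyNumber M k = n.choose k) ↔
        (atomsOfSublattice M m₀).ncard = n) := by
  classical
  set A := atomsOfSublattice M m₀ with hA
  have hAfin : A.Finite := Set.toFinite A
  set 𝒜 : Finset α := hAfin.toFinset with h𝒜
  have hmem𝒜 : ∀ a, a ∈ 𝒜 ↔ a ∈ A := fun a => hAfin.mem_toFinset
  have hatomM : ∀ a ∈ A, a ∈ M := fun a ha => ha.1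
  have hatomlt : ∀ a ∈ A, m₀ < a := fun a ha => ha.2.1
  -- meet-distributivity
  have hmd : ∀ x ∈ M, ∀ y ∈ M, ∀ z ∈ M, x ⊓ (y ⊔ z) = (x ⊓ y) ⊔ (x ⊓ z) := by
    intro x hx y hy z hz
    have e1 : (x ⊓ z) ⊔ (x ⊓ y) = ((x ⊓ z) ⊔ x) ⊓ ((x ⊓ z) ⊔ y) :=
      hdist _ (hmeet x hx z hz) x hx y hy
    have e2 : y ⊔ (x ⊓ z) = (y ⊔ x) ⊓ (y ⊔ z) := hdist y hy x hx z hz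
    have e3 : (x ⊓ z) ⊔ x = x := sup_eq_right.mpr inf_le_left
    have e4 : x ⊓ (y ⊔ x) = x := inf_eq_left.mpr le_sup_right
    calc x ⊓ (y ⊔ z) = (x ⊓ (y ⊔ x)) ⊓ (y ⊔ z) := by rw [e4]
      _ = x ⊓ ((y ⊔ x) ⊓ (y ⊔ z)) := by rw [inf_assoc]
      _ = x ⊓ (y ⊔ (x ⊓ z)) := by rw [← e2]
      _ = x ⊓ ((x ⊓ z) ⊔ y) := by rw [sup_comm]
      _ = ((x ⊓ z) ⊔ x) ⊓ ((x ⊓ z) ⊔ y) := by rw [e3]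
      _ = (x ⊓ z) ⊔ (x ⊓ y) := e1.symm
      _ = (x ⊓ y) ⊔ (x ⊓ z) := sup_comm _ _
  -- L1 : closure of joins of atoms
  have hL1 : ∀ S : Finset α, (∀ a ∈ S, a ∈ A) → m₀ ⊔ S.sup id ∈ M := by
    intro S
    induction S using Finset.induction_on with
    | empty => intro _; simpa using hm₀.1
    | insert a S hnotmem ih =>
      intro hall
      have h1 : m₀ ⊔ S.sup id ∈ M := ih fun b hb => hall b (Finset.mem_insert_of_mem hb)
      have h2 : a ∈ M := hatomM a (hall a (Finset.mem_insert_self a S))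
      have : m₀ ⊔ (insert a S).sup id = a ⊔ (m₀ ⊔ S.sup id) := by
        rw [Finset.sup_insert]
        simp only [id]
        rw [sup_left_comm]
      rw [this]
      exact hjoin a h2 _ h1
  -- L2 : independence of atoms
  have hL2 : ∀ S : Finset α, (∀ s ∈ S, s ∈ A) → ∀ a ∈ A, a ≤ m₀ ⊔ S.sup id → a ∈ S := by
    intro S
    induction S using Finset.induction_on with
    | empty =>
      intro _ a ha hle
      simp only [Finset.sup_empty, sup_bot_eq] at hle
      exact absurd hle (hatomlt a ha).not_ge
    | insert s S hnotmem ih =>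
      intro hall a ha hle
      have hsA : s ∈ A := hall s (Finset.mem_insert_self s S)
      have hSA : ∀ x ∈ S, x ∈ A := fun x hx => hall x (Finset.mem_insert_of_mem hx)
      have heS : m₀ ⊔ S.sup id ∈ M := hL1 S hSA
      have haM : a ∈ M := hatomM a ha
      have hsM : s ∈ M := hatomM s hsA
      have hes : m₀ ⊔ (insert s S).sup id = s ⊔ (m₀ ⊔ S.sup id) := by
        rw [Finset.sup_insert]; simp only [id]; rw [sup_left_comm]
      rw [hes] at hle
      have key : a = (a ⊓ s) ⊔ (a ⊓ (m₀ ⊔ S.sup id)) := by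
        rw [← hmd a haM s hsM _ heS]
        exact (inf_eq_left.mpr hle).symm
      -- dichotomy for c ∈ M, m₀ ≤ c ≤ a : c = m₀ ∨ c = a
      have dich : ∀ c ∈ M, m₀ ≤ c → c ≤ a → c = m₀ ∨ c = a := by
        intro c hc h1 h2
        rcases eq_or_lt_of_le h2 with h | h
        · exact Or.inr h
        · rcases eq_or_lt_of_le h1 with h' | h'
          · exact Or.inl h'.symm
          · exact absurd h (ha.2.2 c hc h')
      have hc1 : a ⊓ s ∈ M := hmeet a haM s hsM
      have hc2 : a ⊓ (m₀ ⊔ S.sup id) ∈ M := hmeet a haM _ heS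
      have hm1 : m₀ ≤ a ⊓ s := le_inf (hatomlt a ha).le (hatomlt s hsA).le
      have hm2 : m₀ ≤ a ⊓ (m₀ ⊔ S.sup id) := le_inf (hatomlt a ha).le le_sup_left
      rcases dich _ hc2 hm2 inf_le_left with h2 | h2
      · rcases dich _ hc1 hm1 inf_le_left with h1 | h1
        · rw [h1, h2, sup_idem] at key
          exact absurd key.symm (hatomlt a ha).ne
        · -- a ≤ s, hence a = s
          have hale : a ≤ s := by rw [← h1]; exact inf_le_right
          rcases eq_or_lt_of_le hale with h | h
          · exact h ▸ Finset.mem_insert_self s S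
          · exact absurd h (hsA.2.2 a haM (hatomlt a ha))
      · have : a ≤ m₀ ⊔ S.sup id := by rw [← h2]; exact inf_le_right
        exact Finset.mem_insert_of_mem (ih hSA a ha this)
  -- L3 : canonical representation
  have hL3 : ∀ x ∈ M, x = m₀ ⊔ (𝒜.filter (· ≤ x)).sup id := by
    intro x hx
    obtain ⟨S, hS, hxS⟩ := hMatomistic x hx
    apply le_antisymm
    · have hsub : S ⊆ 𝒜.filter (· ≤ x) := by
        intro a haS
        refine Finset.mem_filter.mpr ⟨(hmem𝒜 a).mpr (hS a haS), ?_⟩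
        calc a ≤ S.sup id := Finset.le_sup (f := id) haS
          _ ≤ x := by rw [hxS]; exact le_sup_right
      calc x = m₀ ⊔ S.sup id := hxS
        _ ≤ m₀ ⊔ (𝒜.filter (· ≤ x)).sup id := sup_le_sup_left (Finset.sup_mono hsub) m₀
    · apply sup_le
      · rw [hxS]; exact le_sup_left
      · apply Finset.sup_le
        intro a haF
        exact (Finset.mem_filter.mp haF).2
  -- the order isomorphism
  have hinvmem : ∀ S : Finset {a : α // a ∈ 𝒜},
      m₀ ⊔ (S.image Subtype.val).sup id ∈ M := by
    intro S
    apply hL1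
    intro a haI
    obtain ⟨b, _, rfl⟩ := Finset.mem_image.mp haI
    exact (hmem𝒜 _).mp b.2
  let iso : M ≃o Finset {a : α // a ∈ 𝒜} :=
    { toFun := fun x => Finset.univ.filter (fun a => (a : α) ≤ (x : α))
      invFun := fun S => ⟨m₀ ⊔ (S.image Subtype.val).sup id, hinvmem S⟩
      left_inv := by
        intro x
        apply Subtype.ext
        show m₀ ⊔ _ = (x : α)
        have himg : (Finset.univ.filter (fun a : {a : α // a ∈ 𝒜} => (a : α) ≤ (x : α))).image
            Subtype.val = 𝒜.filter (· ≤ (x : α)) := by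
          ext a
          simp only [Finset.mem_image, Finset.mem_filter, Finset.mem_univ, true_and]
          constructor
          · rintro ⟨b, hb, rfl⟩; exact ⟨b.2, hb⟩
          · rintro ⟨ha, hle⟩; exact ⟨⟨a, ha⟩, hle, rfl⟩
        rw [himg]
        exact (hL3 x x.2).symm
      right_inv := by
        intro S
        ext a
        simp only [Finset.mem_filter, Finset.mem_univ, true_and]
        constructor
        · intro hle
          have : (a : α) ∈ S.image Subtype.val := by
            apply hL2 (S.image Subtype.val) _ _ ((hmem𝒜 _).mp a.2) hle
            intro b hb
            obtain ⟨c, _, rfl⟩ := Finset.mem_image.mp hb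
            exact (hmem𝒜 _).mp c.2
          obtain ⟨c, hc, hca⟩ := Finset.mem_image.mp this
          rwa [← Subtype.ext hca.symm] at hc
        · intro haS
          calc (a : α) ≤ (S.image Subtype.val).sup id :=
                Finset.le_sup (f := id) (Finset.mem_image_of_mem _ haS)
            _ ≤ _ := le_sup_right
      map_rel_iff' := by
        intro x y
        show Finset.univ.filter _ ⊆ Finset.univ.filter _ ↔ x ≤ y
        constructor
        · intro hsub
          have : ∀ a ∈ 𝒜.filter (· ≤ (x : α)), a ≤ (y : α) := by
            intro a haF
            obtain ⟨ha𝒜, hax⟩ := Finset.mem_filter.mp haF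
            have := hsub (Finset.mem_filter.mpr ⟨Finset.mem_univ (⟨a, ha𝒜⟩ :
              {a : α // a ∈ 𝒜}), hax⟩)
            exact (Finset.mem_filter.mp this).2
          show (x : α) ≤ (y : α)
          rw [hL3 x x.2]
          exact sup_le (hm₀.2 y.2) (Finset.sup_le this)
        · intro hxy
          intro a ha
          simp only [Finset.mem_filter, Finset.mem_univ, true_and] at ha ⊢
          exact le_trans ha hxy }
  -- heights and Whitney numbers
  have hheight : ∀ x : M, Order.height x = ((iso x).card : ℕ∞) := by
    intro x
    rw [← myOrderIsoHeight iso x, myFinsetHeightEqCard]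
  have hW : ∀ k : ℕ, whitneyNumber M k = (𝒜.card).choose k := by
    intro k
    unfold whitneyNumber
    have hseteq : {x : M | Order.height x = (k : ℕ∞)} =
        (⇑iso.symm) '' {S : Finset {a : α // a ∈ 𝒜} | S.card = k} := by
      ext x
      simp only [Set.mem_setOf_eq, Set.mem_image]
      constructor
      · intro hx
        refine ⟨iso x, ?_, iso.symm_apply_apply x⟩
        have := hheight x
        rw [hx] at this
        exact Nat.cast_inj.mp this.symm
      · rintro ⟨S, hS, rfl⟩
        rw [hheight, iso.apply_symm_apply]
        exact Nat.cast_inj.mpr hS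
    rw [hseteq, Set.ncard_image_of_injective _ iso.symm.injective]
    have hset : {S : Finset {a : α // a ∈ 𝒜} | S.card = k} =
        ↑(Finset.univ.powersetCard k : Finset (Finset {a : α // a ∈ 𝒜})) := by
      ext S
      simp only [Set.mem_setOf_eq, Finset.mem_coe]
      exact Finset.mem_powersetCard_univ.symm
    rw [hset, Set.ncard_coe_finset, Finset.card_powersetCard, Finset.card_univ,
      Fintype.card_coe]
  -- t ≤ n
  have htn : 𝒜.card ≤ n := by
    set x : M := iso.symm Finset.univ with hx
    have h1 : Order.height x = (𝒜.card : ℕ∞) := by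
      rw [hheight, iso.apply_symm_apply, Finset.card_univ, Fintype.card_coe]
    have h2 : Order.height x ≤ Order.height (x : α) :=
      Order.height_le_height_apply_of_strictMono (Subtype.val : M → α)
        (fun a b h => Subtype.coe_lt_coe.mpr h) x
    have h3 : Order.height (x : α) ≤ Order.height (⊤ : α) := Order.height_mono le_top
    rw [h1, hht] at *
    exact_mod_cast le_trans (h1 ▸ h2) (hht ▸ h3)
  have hncard : A.ncard = 𝒜.card := by
    rw [h𝒜]; exact Set.ncard_eq_toFinset_card A hAfin
  constructor
  · intro k hk
    rw [hW]
    exact Nat.choose_le_choose k htn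
  · constructor
    · intro h
      have h1 := h n le_rfl
      rw [hW, Nat.choose_self] at h1
      have h2 : n ≤ 𝒜.card := by
        by_contra hlt
        rw [Nat.choose_eq_zero_of_lt (lt_of_not_ge hlt)] at h1
        exact one_ne_zero h1.symm
      rw [hncard]
      exact le_antisymm htn h2
    · intro h k hk
      rw [hW, hncard] at *
      rw [h]
end

section
/- Let q be a prime power and n a positive integer. A subset U ⊆ P_q(n) containing the zero subspace {0} and closed under subspace sum and intersection (i.e., a sublattice of the linear lattice P_q(n)) that is atomistic and distributive as a lattice, is a linear code closed under intersection; conversely, every linear code in P_q(n) that is closed under intersection is an atomistic distributive sublattice of P_q(n). -/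
open Module

/-- The subspace distance `d_S(X, Y) = dim(X + Y) - dim(X ∩ Y)`. -/
noncomputable def subspaceDist {F V : Type*} [Field F] [AddCommGroup V] [Module F V]
    (X Y : Submodule F V) : ℕ :=
  finrank F ↥(X ⊔ Y) - finrank F ↥(X ⊓ Y)

/-- `U ⊆ P_q(n)` is a linear code: `{0} ∈ U` and there is an operation `⊞` on `U`
making it an abelian group with identity `{0}`, every element self-inverse, and the
subspace distance translation invariant. -/
def IsLinearCode {F V : Type*} [Field F] [AddCommGroup V] [Module F V]
    (U : Set (Submodule F V)) : Prop :=
  ∃ (h0 : ⊥ ∈ U) (op : U → U → U),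
    (∀ X Y, op X Y = op Y X) ∧
    (∀ X Y Z, op (op X Y) Z = op X (op Y Z)) ∧
    (∀ X, op X ⟨⊥, h0⟩ = X) ∧
    (∀ X, op X X = ⟨⊥, h0⟩) ∧
    (∀ X Y W, subspaceDist (op X W : Submodule F V) (op Y W : Submodule F V) =
      subspaceDist (X : Submodule F V) (Y : Submodule F V))

/-!
Forward direction: a finite atomistic distributive lattice is a Boolean algebra, and since
`dim` is a modular valuation on subspaces, `d_S(X, Y) = dim (X ∆ Y)` in that algebra. Hence the
symmetric difference is a translation-invariant group law of exponent two on `U`.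

Converse: `dim (X ⊞ Y) = d_S(X, Y)`. From this, `X ⊞ D` is a complement of `D` inside `X`
whenever `D ≤ X`, and `X ⊞ Y = X + Y` whenever `X ∩ Y = 0`; this gives closure under sums and
atomisticity. The crux is that atoms are prime: if an atom `A ≤ X + Y` lies in neither `X` nor `Y`
and the pair is minimal, the modular law forces `A + X = A + Y`, that is `A ⊞ X = A ⊞ Y`, so
`X = Y` and `A ≤ X` after all. Distributivity then follows by comparing both sides on atoms.
-/

open scoped symmDiff

theorem complementedLattice_of_finite_of_isAtomistic {α : Type*} [Lattice α]
    [IsModularLattice α] [BoundedOrder α] [Finite α] [IsAtomistic α] :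
    ComplementedLattice α := by
  have := Fintype.ofFinite α
  let := Fintype.toCompleteLattice α
  have := CompleteLattice.isCompactlyGenerated_of_wellFoundedGT (α := α)
  exact complementedLattice_of_isAtomistic

theorem le_sup_of_le_sup_of_forall_lt {α : Type*} [Lattice α] [IsModularLattice α]
    {U : Set α} {a x y : α} (hmem : y ⊓ (a ⊔ x) ∈ U) (h : a ≤ x ⊔ y) (hax : ¬a ≤ x)
    (hay : ¬a ≤ y) (ih : ∀ y' ∈ U, y' < y → a ≤ x ⊔ y' → a ≤ x ∨ a ≤ y') : y ≤ a ⊔ x := by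
  have hmod : x ⊔ y ⊓ (a ⊔ x) = a ⊔ x := by
    rw [← sup_inf_assoc_of_le y le_sup_right, inf_eq_right.2 (sup_le h le_sup_left)]
  rcases (inf_le_left : y ⊓ (a ⊔ x) ≤ y).lt_or_eq with hlt | heq
  · rcases ih _ hmem hlt (le_sup_left.trans hmod.ge) with h' | h'
    exacts [absurd h' hax, absurd (h'.trans inf_le_left) hay]
  · rw [← heq]
    exact inf_le_right

section Subspaces

variable {F V : Type*} [Field F] [AddCommGroup V] [Module F V]

theorem subspaceDist_add_finrank_eq_iff_le [FiniteDimensional F V] {X Y : Submodule F V} :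
    subspaceDist X Y + finrank F Y = finrank F X ↔ Y ≤ X := by
  have hsum := Submodule.finrank_sup_add_finrank_inf_eq X Y
  have hmono : finrank F ↥(X ⊓ Y) ≤ finrank F ↥(X ⊔ Y) :=
    Submodule.finrank_mono (inf_le_left.trans le_sup_left)
  unfold subspaceDist
  constructor
  · intro h
    exact inf_eq_right.1 (Submodule.eq_of_le_of_finrank_eq inf_le_right (by omega))
  · intro h
    have := Submodule.finrank_mono h
    rw [sup_eq_left.2 h, inf_eq_right.2 h]
    omega

def IsAtomIn (U : Set (Submodule F V)) (A : Submodule F V) : Prop :=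
  A ∈ U ∧ ⊥ < A ∧ ∀ B ∈ U, ⊥ < B → ¬B < A

structure LinearCodeOp (U : Set (Submodule F V)) where
  bot_mem : ⊥ ∈ U
  op : U → U → U
  op_comm : ∀ X Y, op X Y = op Y X
  op_assoc : ∀ X Y Z, op (op X Y) Z = op X (op Y Z)
  op_bot : ∀ X, op X ⟨⊥, bot_mem⟩ = X
  op_self : ∀ X, op X X = ⟨⊥, bot_mem⟩
  subspaceDist_op : ∀ X Y W,
    subspaceDist (op X W : Submodule F V) (op Y W) = subspaceDist (X : Submodule F V) Y

variable {U : Set (Submodule F V)}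

theorem IsAtomIn.inf_eq_bot_or_le (hinf : ∀ X ∈ U, ∀ Y ∈ U, X ⊓ Y ∈ U)
    {A B : Submodule F V} (hA : IsAtomIn U A) (hB : B ∈ U) : A ⊓ B = ⊥ ∨ A ≤ B := by
  refine or_iff_not_imp_left.2 fun hne => inf_eq_left.1 ?_
  exact inf_le_left.eq_of_not_lt (hA.2.2 _ (hinf A hA.1 B hB) (bot_lt_iff_ne_bot.2 hne))

theorem exists_isAtomIn_le [FiniteDimensional F V] {X : Submodule F V} (hX : X ∈ U)
    (hne : X ≠ ⊥) : ∃ A, IsAtomIn U A ∧ A ≤ X := by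
  obtain ⟨A, ⟨hAU, hApos, hAX⟩, hmin⟩ :=
    wellFounded_lt.has_min {B | B ∈ U ∧ ⊥ < B ∧ B ≤ X} ⟨X, hX, bot_lt_iff_ne_bot.2 hne, le_rfl⟩
  refine ⟨A, ⟨hAU, hApos, fun B hB hBpos hBA => ?_⟩, hAX⟩
  exact hmin B ⟨hB, hBpos, hBA.le.trans hAX⟩ hBA

theorem isAtomistic_of_forall_eq_finset_sup [OrderBot U]
    (hbot : ((⊥ : U) : Submodule F V) = ⊥)
    (hatom : ∀ X ∈ U, ∃ S : Finset (Submodule F V), (∀ A ∈ S, IsAtomIn U A) ∧ X = S.sup id) :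
    IsAtomistic U := by
  have isAtom_of_isAtomIn : ∀ A : U, IsAtomIn U A → IsAtom A := by
    refine fun A hA => ⟨fun h => hA.2.1.ne' (by rw [h, hbot]), fun B hBA => ?_⟩
    by_contra hB
    refine hA.2.2 B B.2 (bot_lt_iff_ne_bot.2 fun h => hB ?_) hBA
    exact Subtype.ext (h.trans hbot.symm)
  refine ⟨fun X => ?_⟩
  obtain ⟨S, hS, hX⟩ := hatom X X.2
  refine ⟨{B | (B : Submodule F V) ∈ S}, ⟨fun B hB => ?_, fun Y hY => ?_⟩,
    fun B hB => isAtom_of_isAtomIn B (hS B hB)⟩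
  · exact (show (B : Submodule F V) ≤ X from hX ▸ Finset.le_sup (f := id) hB)
  · show (X : Submodule F V) ≤ Y
    rw [hX]
    exact Finset.sup_le fun A hA => hY (show (⟨A, (hS A hA).1⟩ : U) ∈ _ from hA)

section BooleanAlgebra

variable [FiniteDimensional F V] [GeneralizedBooleanAlgebra U]

theorem subspaceDist_eq_finrank_symmDiff
    (coe_sup : ∀ X Y : U, ((X ⊔ Y : U) : Submodule F V) = (X : Submodule F V) ⊔ Y)
    (coe_inf : ∀ X Y : U, ((X ⊓ Y : U) : Submodule F V) = (X : Submodule F V) ⊓ Y)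
    (coe_bot : ((⊥ : U) : Submodule F V) = ⊥) (X Y : U) :
    subspaceDist (X : Submodule F V) Y = finrank F ((X ∆ Y : U) : Submodule F V) := by
  have hsup : ((X ∆ Y : U) : Submodule F V) ⊔ ((X ⊓ Y : U) : Submodule F V) =
      (X : Submodule F V) ⊔ Y := by
    rw [← coe_sup, symmDiff_sup_inf, coe_sup]
  have hinf : ((X ∆ Y : U) : Submodule F V) ⊓ ((X ⊓ Y : U) : Submodule F V) = ⊥ := by
    rw [← coe_inf, (disjoint_symmDiff_inf X Y).eq_bot, coe_bot]
  have hsum := Submodule.finrank_sup_add_finrank_inf_eq ((X ∆ Y : U) : Submodule F V)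
    ((X ⊓ Y : U) : Submodule F V)
  rw [hsup, hinf, finrank_bot, coe_inf] at hsum
  unfold subspaceDist
  omega

theorem isLinearCode_of_generalizedBooleanAlgebra
    (coe_sup : ∀ X Y : U, ((X ⊔ Y : U) : Submodule F V) = (X : Submodule F V) ⊔ Y)
    (coe_inf : ∀ X Y : U, ((X ⊓ Y : U) : Submodule F V) = (X : Submodule F V) ⊓ Y)
    (coe_bot : ((⊥ : U) : Submodule F V) = ⊥) : IsLinearCode U := by
  have h0 : ⊥ ∈ U := coe_bot ▸ (⊥ : U).2
  have hbot : (⟨⊥, h0⟩ : U) = ⊥ := Subtype.ext coe_bot.symm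
  refine ⟨h0, (· ∆ ·), symmDiff_comm, symmDiff_assoc, fun X => ?_, fun X => ?_,
    fun X Y W => ?_⟩
  · simp only [hbot, symmDiff_bot]
  · simp only [hbot, symmDiff_self]
  · simp only [subspaceDist_eq_finrank_symmDiff coe_sup coe_inf coe_bot]
    rw [symmDiff_symmDiff_symmDiff_comm, symmDiff_self, symmDiff_bot]

end BooleanAlgebra

theorem isLinearCode_of_atomistic_distrib [Fintype F] [FiniteDimensional F V]
    (h0 : ⊥ ∈ U) (hsup : ∀ X ∈ U, ∀ Y ∈ U, X ⊔ Y ∈ U) (hinf : ∀ X ∈ U, ∀ Y ∈ U, X ⊓ Y ∈ U)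
    (hatom : ∀ X ∈ U, ∃ S : Finset (Submodule F V), (∀ A ∈ S, IsAtomIn U A) ∧ X = S.sup id)
    (hdistrib : ∀ X ∈ U, ∀ Y ∈ U, ∀ Z ∈ U, X ⊔ (Y ⊓ Z) = (X ⊔ Y) ⊓ (X ⊔ Z)) :
    IsLinearCode U := by
  let : DistribLattice U :=
    { Subtype.lattice (fun X Y hX hY => hsup X hX Y hY)
        (fun X Y hX hY => hinf X hX Y hY) with
      le_sup_inf := fun X Y Z => (hdistrib X X.2 Y Y.2 Z Z.2).ge }
  have : Finite V := Module.finite_of_finite F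
  have : Finite (Submodule F V) := Finite.of_injective _ SetLike.coe_injective
  have := Fintype.ofFinite U
  have : Nonempty U := ⟨⟨⊥, h0⟩⟩
  let : BoundedOrder U := { Subtype.orderBot h0, Fintype.toOrderTop U with }
  have : IsAtomistic U := isAtomistic_of_forall_eq_finset_sup rfl hatom
  have := complementedLattice_of_finite_of_isAtomistic (α := U)
  let := DistribLattice.booleanAlgebraOfComplemented U
  exact isLinearCode_of_generalizedBooleanAlgebra (fun _ _ => rfl) (fun _ _ => rfl) rfl

namespace LinearCodeOp

theorem op_op_cancel_right (C : LinearCodeOp U) (X Y : U) : C.op (C.op X Y) Y = X := by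
  rw [C.op_assoc, C.op_self, C.op_bot]

theorem op_op_cancel_left (C : LinearCodeOp U) (X Y : U) : C.op X (C.op X Y) = Y := by
  rw [← C.op_assoc, C.op_self, C.op_comm, C.op_bot]

theorem op_right_injective (C : LinearCodeOp U) (W : U) : Function.Injective (C.op W) :=
  fun X Y h => by rw [← C.op_op_cancel_left W X, h, C.op_op_cancel_left]

theorem finrank_op (C : LinearCodeOp U) (X Y : U) :
    finrank F (C.op X Y : Submodule F V) = subspaceDist (X : Submodule F V) Y := by
  rw [← C.subspaceDist_op X Y Y, C.op_self, subspaceDist,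
    show ((⟨⊥, C.bot_mem⟩ : U) : Submodule F V) = ⊥ from rfl, sup_bot_eq, inf_bot_eq,
    finrank_bot, Nat.sub_zero]

variable [FiniteDimensional F V]

theorem op_le_of_le (C : LinearCodeOp U) {X D : U} (h : (D : Submodule F V) ≤ X) :
    (C.op X D : Submodule F V) ≤ X := by
  have hD := subspaceDist_add_finrank_eq_iff_le.2 h
  rw [← subspaceDist_add_finrank_eq_iff_le, ← C.finrank_op, C.op_op_cancel_left, C.finrank_op]
  omega

theorem op_inf_eq_bot_of_le (C : LinearCodeOp U) {X D : U} (h : (D : Submodule F V) ≤ X) :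
    (C.op X D : Submodule F V) ⊓ D = ⊥ := by
  have hdist := C.finrank_op (C.op X D) D
  rw [C.op_op_cancel_right] at hdist
  have hle := Submodule.finrank_mono (sup_le (C.op_le_of_le h) h)
  have hmono : finrank F ↥((C.op X D : Submodule F V) ⊓ D) ≤
      finrank F ↥((C.op X D : Submodule F V) ⊔ D) :=
    Submodule.finrank_mono (inf_le_left.trans le_sup_left)
  rw [← Submodule.finrank_eq_zero]
  unfold subspaceDist at hdist
  omega

theorem op_sup_eq_of_le (C : LinearCodeOp U) {X D : U} (h : (D : Submodule F V) ≤ X) :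
    (C.op X D : Submodule F V) ⊔ D = X := by
  refine Submodule.eq_of_le_of_finrank_eq (sup_le (C.op_le_of_le h) h) ?_
  have hsum := Submodule.finrank_sup_add_finrank_inf_eq (C.op X D : Submodule F V) D
  rw [C.op_inf_eq_bot_of_le h, finrank_bot, C.finrank_op] at hsum
  have hD := subspaceDist_add_finrank_eq_iff_le.2 h
  omega

theorem op_eq_sup_of_inf_eq_bot (C : LinearCodeOp U) {X Y : U}
    (h : (X : Submodule F V) ⊓ Y = ⊥) : (C.op X Y : Submodule F V) = (X : Submodule F V) ⊔ Y := by
  have hsum := Submodule.finrank_sup_add_finrank_inf_eq (X : Submodule F V) Y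
  rw [h, finrank_bot] at hsum
  have hop : finrank F (C.op X Y : Submodule F V) =
      finrank F ↥((X : Submodule F V) ⊔ Y) := by
    rw [C.finrank_op, subspaceDist, h, finrank_bot, Nat.sub_zero]
  have hX : (X : Submodule F V) ≤ C.op X Y := by
    rw [← subspaceDist_add_finrank_eq_iff_le, ← C.finrank_op, C.op_comm _ X,
      C.op_op_cancel_left]
    omega
  have hY : (Y : Submodule F V) ≤ C.op X Y := by
    rw [← subspaceDist_add_finrank_eq_iff_le, ← C.finrank_op, C.op_op_cancel_right]
    omega
  exact (Submodule.eq_of_le_of_finrank_eq (sup_le hX hY) hop.symm).symm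

theorem sup_mem (C : LinearCodeOp U) (hinf : ∀ X ∈ U, ∀ Y ∈ U, X ⊓ Y ∈ U) :
    ∀ X ∈ U, ∀ Y ∈ U, X ⊔ Y ∈ U := by
  intro X hX Y hY
  let D : U := ⟨X ⊓ Y, hinf X hX Y hY⟩
  have hD : (D : Submodule F V) ≤ (⟨X, hX⟩ : U) := inf_le_left
  let X' := C.op ⟨X, hX⟩ D
  have hX'Y : (X' : Submodule F V) ⊓ (⟨Y, hY⟩ : U) = ⊥ := by
    refine le_bot_iff.1 ((le_inf inf_le_left ?_).trans (C.op_inf_eq_bot_of_le hD).le)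
    exact le_inf (inf_le_left.trans (C.op_le_of_le hD)) inf_le_right
  have hsup : (X' : Submodule F V) ⊔ Y = X ⊔ Y := calc
    (X' : Submodule F V) ⊔ Y = (X' : Submodule F V) ⊔ (D : Submodule F V) ⊔ Y := by
      rw [sup_assoc, sup_eq_right.2 (inf_le_right : X ⊓ Y ≤ Y)]
    _ = X ⊔ Y := by rw [C.op_sup_eq_of_le hD]
  rw [← hsup, ← C.op_eq_sup_of_inf_eq_bot hX'Y]
  exact (C.op X' _).2

theorem exists_isAtomIn_finset_sup_eq (C : LinearCodeOp U) :
    ∀ X ∈ U, ∃ S : Finset (Submodule F V), (∀ A ∈ S, IsAtomIn U A) ∧ X = S.sup id := by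
  classical
  intro X
  induction X using WellFoundedLT.induction with
  | _ X ih =>
  intro hX
  by_cases hne : X = ⊥
  · exact ⟨∅, by simp, by simp [hne]⟩
  obtain ⟨A, hA, hAX⟩ := exists_isAtomIn_le hX hne
  let X' := C.op ⟨X, hX⟩ ⟨A, hA.1⟩
  have hsup : (X' : Submodule F V) ⊔ A = X := C.op_sup_eq_of_le hAX
  have hlt : (X' : Submodule F V) < X := by
    refine (C.op_le_of_le hAX).lt_of_ne fun h => hA.2.1.ne' ?_
    rw [← inf_eq_right.2 (h ▸ hAX : A ≤ X'), C.op_inf_eq_bot_of_le hAX]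
  obtain ⟨S, hS, hX'⟩ := ih X' hlt X'.2
  refine ⟨insert A S, Finset.forall_mem_insert _ _ _ |>.2 ⟨hA, hS⟩, ?_⟩
  rw [Finset.sup_insert, ← hX', id, sup_comm, hsup]

theorem le_or_le_of_le_sup (C : LinearCodeOp U) (hinf : ∀ X ∈ U, ∀ Y ∈ U, X ⊓ Y ∈ U)
    {A : Submodule F V} (hA : IsAtomIn U A) :
    ∀ X ∈ U, ∀ Y ∈ U, A ≤ X ⊔ Y → A ≤ X ∨ A ≤ Y := by
  suffices ∀ p : Submodule F V × Submodule F V, p.1 ∈ U → p.2 ∈ U →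
      A ≤ p.1 ⊔ p.2 → A ≤ p.1 ∨ A ≤ p.2 from fun X hX Y hY => this (X, Y) hX hY
  intro p
  induction p using WellFoundedLT.induction with
  | _ p ih =>
  obtain ⟨X, Y⟩ := p
  intro hX hY h
  by_contra! ⟨hAX, hAY⟩
  have hsup := C.sup_mem hinf
  have hYX : Y ≤ A ⊔ X := le_sup_of_le_sup_of_forall_lt (hinf _ hY _ (hsup _ hA.1 _ hX))
    h hAX hAY fun Y' hY' hlt => ih (X, Y') (Prod.mk_lt_mk_iff_right.2 hlt) hX hY'
  have hXY : X ≤ A ⊔ Y := le_sup_of_le_sup_of_forall_lt (hinf _ hX _ (hsup _ hA.1 _ hY))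
    (sup_comm X Y ▸ h) hAY hAX fun X' hX' hlt hle =>
      (ih (X', Y) (Prod.mk_lt_mk_iff_left.2 hlt) hX' hY (sup_comm Y X' ▸ hle)).symm
  have hop : ∀ Z : U, ¬A ≤ Z → (C.op ⟨A, hA.1⟩ Z : Submodule F V) = A ⊔ Z := fun Z hAZ =>
    C.op_eq_sup_of_inf_eq_bot ((hA.inf_eq_bot_or_le hinf Z.2).resolve_right hAZ)
  have hXeqY : (⟨X, hX⟩ : U) = ⟨Y, hY⟩ := C.op_right_injective ⟨A, hA.1⟩ <| Subtype.ext <| by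
    rw [hop ⟨X, hX⟩ hAX, hop ⟨Y, hY⟩ hAY]
    exact le_antisymm (sup_le le_sup_left hXY) (sup_le le_sup_left hYX)
  obtain rfl : X = Y := congrArg Subtype.val hXeqY
  exact hAX (sup_idem X ▸ h)

theorem sup_inf_left (C : LinearCodeOp U) (hinf : ∀ X ∈ U, ∀ Y ∈ U, X ⊓ Y ∈ U) :
    ∀ X ∈ U, ∀ Y ∈ U, ∀ Z ∈ U, X ⊔ (Y ⊓ Z) = (X ⊔ Y) ⊓ (X ⊔ Z) := by
  intro X hX Y hY Z hZ
  refine le_antisymm sup_inf_le ?_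
  have hsup := C.sup_mem hinf
  obtain ⟨S, hS, hR⟩ :=
    C.exists_isAtomIn_finset_sup_eq _ (hinf _ (hsup X hX Y hY) _ (hsup X hX Z hZ))
  rw [hR]
  refine Finset.sup_le fun A hAS => ?_
  have hAR : A ≤ (X ⊔ Y) ⊓ (X ⊔ Z) := hR ▸ Finset.le_sup (f := id) hAS
  have prime := C.le_or_le_of_le_sup hinf (hS A hAS)
  rcases prime X hX Y hY (hAR.trans inf_le_left) with hAX | hAY
  · exact hAX.trans le_sup_left
  rcases prime X hX Z hZ (hAR.trans inf_le_right) with hAX | hAZ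
  · exact hAX.trans le_sup_left
  · exact (le_inf hAY hAZ).trans le_sup_right

end LinearCodeOp

end Subspaces

theorem distrib_sublattice_iff_linear_code_closed_inter_general
    (F V : Type*) [Field F] [Fintype F]
    [AddCommGroup V] [Module F V] [FiniteDimensional F V]
    (U : Set (Submodule F V)) :
    (⊥ ∈ U ∧
      (∀ X ∈ U, ∀ Y ∈ U, X ⊔ Y ∈ U) ∧
      (∀ X ∈ U, ∀ Y ∈ U, X ⊓ Y ∈ U) ∧
      (∀ X ∈ U, ∃ S : Finset (Submodule F V),
        (∀ A ∈ S, A ∈ U ∧ ⊥ < A ∧ ∀ B ∈ U, ⊥ < B → ¬ B < A) ∧ X = S.sup id) ∧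
      (∀ X ∈ U, ∀ Y ∈ U, ∀ Z ∈ U, X ⊔ (Y ⊓ Z) = (X ⊔ Y) ⊓ (X ⊔ Z)))
    ↔ (IsLinearCode U ∧ ∀ X ∈ U, ∀ Y ∈ U, X ⊓ Y ∈ U) := by
  constructor
  · rintro ⟨h0, hsup, hinf, hatom, hdistrib⟩
    exact ⟨isLinearCode_of_atomistic_distrib h0 hsup hinf hatom hdistrib, hinf⟩
  · rintro ⟨⟨h0, op, hcomm, hassoc, hbot, hself, hdist⟩, hinf⟩
    let C : LinearCodeOp U := ⟨h0, op, hcomm, hassoc, hbot, hself, hdist⟩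
    exact ⟨h0, C.sup_mem hinf, hinf, C.exists_isAtomIn_finset_sup_eq, C.sup_inf_left hinf⟩

/-- A subset `U` of `P_q(n)` containing `{0}`, closed under subspace sum
and intersection, which as a lattice is atomistic and distributive, is exactly the same
thing as a linear code closed under intersection. -/
theorem distrib_sublattice_iff_linear_code_closed_inter
    (q n : ℕ) (hq : IsPrimePow q) (hn : 0 < n)
    (F V : Type*) [Field F] [Fintype F] (hF : Fintype.card F = q)
    [AddCommGroup V] [Module F V] [FiniteDimensional F V] (hV : finrank F V = n)
    (U : Set (Submodule F V)) :
    (⊥ ∈ U ∧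
      (∀ X ∈ U, ∀ Y ∈ U, X ⊔ Y ∈ U) ∧
      (∀ X ∈ U, ∀ Y ∈ U, X ⊓ Y ∈ U) ∧
      (∀ X ∈ U, ∃ S : Finset (Submodule F V),
        (∀ A ∈ S, A ∈ U ∧ ⊥ < A ∧ ∀ B ∈ U, ⊥ < B → ¬ B < A) ∧ X = S.sup id) ∧
      (∀ X ∈ U, ∀ Y ∈ U, ∀ Z ∈ U, X ⊔ (Y ⊓ Z) = (X ⊔ Y) ⊓ (X ⊔ Z)))
    ↔ (IsLinearCode U ∧ ∀ X ∈ U, ∀ Y ∈ U, X ⊓ Y ∈ U) :=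
  distrib_sublattice_iff_linear_code_closed_inter_general F V U
end

section
/- Let q be a prime power and n a positive integer, and let U ⊆ P_q(n) be a distributive sublattice of the linear lattice P_q(n) (a subset closed under subspace sum and intersection whose induced lattice is distributive) on which a complement function is defined. Then |U| ≤ 2^n, and |U| = 2^n if and only if U is a code derived from a fixed basis, i.e., there exists a basis {e₁, …, e_n} of F_q^n such that U = { span{e_i : i ∈ I} : I ⊆ {1, …, n} }. -/
/-!
A distributive sublattice `U` of the subspace lattice in which every element has a complement
in `U` is a finite Boolean algebra, hence isomorphic to the power set of its `k` atoms, so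
`|U| = 2 ^ k`. Dimension is additive on disjoint elements of `U`, so the dimensions of the atoms,
each at least `1`, add up to `n`: thus `k ≤ n`. If `k = n`, every atom is a line `F ∙ v_a`, the
vectors `v_a` form a basis, and the elements of `U`, being the joins of sets of atoms, are exactly
the spans of subsets of that basis.
-/

open Module

/-- `f : U → U` is a complement function on `U ⊆ P_q(n)`: for every `X ∈ U`,
`X ∩ f(X) = {0}` and `X + f(X) = F_q^n`, `dim f(X) = n - dim X`, `f(f(X)) = X`, and
`f` preserves the subspace distance. -/
def IsComplementFun {F V : Type*} [Field F] [AddCommGroup V] [Module F V]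
    (n : ℕ) (U : Set (Submodule F V)) (f : U → U) : Prop :=
  (∀ X : U, (X : Submodule F V) ⊓ (f X : Submodule F V) = ⊥ ∧
    (X : Submodule F V) ⊔ (f X : Submodule F V) = ⊤) ∧
  (∀ X : U, finrank F ↥(f X : Submodule F V) = n - finrank F ↥(X : Submodule F V)) ∧
  (∀ X : U, f (f X) = X) ∧
  (∀ X Y : U, subspaceDist (f X : Submodule F V) (f Y : Submodule F V) =
    subspaceDist (X : Submodule F V) (Y : Submodule F V))

noncomputable abbrev Subtype.booleanAlgebra {α : Type*} [Lattice α] [BoundedOrder α]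
    {P : α → Prop} (Pbot : P ⊥) (Ptop : P ⊤) (Psup : ∀ ⦃x y⦄, P x → P y → P (x ⊔ y))
    (Pinf : ∀ ⦃x y⦄, P x → P y → P (x ⊓ y))
    (Pdistrib : ∀ ⦃x y z⦄, P x → P y → P z → (x ⊔ y) ⊓ (x ⊔ z) ≤ x ⊔ y ⊓ z)
    (Pcompl : ∀ ⦃x⦄, P x → ∃ y, P y ∧ IsCompl x y) : BooleanAlgebra (Subtype P) :=
  letI : DistribLattice (Subtype P) :=
    { Subtype.lattice Psup Pinf with le_sup_inf := fun x y z => Pdistrib x.2 y.2 z.2 }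
  letI := Subtype.boundedOrder Pbot Ptop
  letI : ComplementedLattice (Subtype P) := ⟨fun x => by
    obtain ⟨y, hy, hxy⟩ := Pcompl x.2
    exact ⟨⟨y, hy⟩, .of_eq (Subtype.ext hxy.inf_eq_bot) (Subtype.ext hxy.sup_eq_top)⟩⟩
  DistribLattice.booleanAlgebraOfComplemented _

namespace Module.Basis

variable {ι R M : Type*} [Semiring R] [Nontrivial R] [AddCommMonoid M] [Module R M]

theorem span_image_injective (e : Basis ι R M) :
    Function.Injective fun I : Set ι => Submodule.span R (e '' I) :=
  fun I J h => Set.ext fun i => by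
    rw [← e.self_mem_span_image, ← e.self_mem_span_image (s := J)]
    exact SetLike.ext_iff.1 h _

theorem card_range_span_image [Finite ι] (e : Basis ι R M) :
    Nat.card (Set.range fun I : Set ι => Submodule.span R (e '' I)) = 2 ^ Nat.card ι := by
  classical
  let _ := Fintype.ofFinite ι
  rw [Nat.card_range_of_injective e.span_image_injective, Nat.card_eq_fintype_card,
    Fintype.card_set, Nat.card_eq_fintype_card]

end Module.Basis

section FiniteBooleanAlgebra

variable {B : Type*} [BooleanAlgebra B] [Finite B]

theorem card_eq_two_pow_card_atoms : Nat.card B = 2 ^ Nat.card {a : B // IsAtom a} := by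
  classical
  let _ := Fintype.ofFinite B
  let _ := Fintype.toCompleteAtomicBooleanAlgebra B
  rw [Nat.card_congr CompleteAtomicBooleanAlgebra.toSetOfIsAtom.toEquiv, Nat.card_eq_fintype_card,
    Fintype.card_set, Nat.card_eq_fintype_card]

theorem card_atoms_eq_of_card_eq_two_pow {m : ℕ} (h : Nat.card B = 2 ^ m) :
    Nat.card {a : B // IsAtom a} = m :=
  Nat.pow_right_injective le_rfl (card_eq_two_pow_card_atoms.symm.trans h)

theorem Finset.sup_univ_atoms_eq_top [Fintype {a : B // IsAtom a}] :
    Finset.univ.sup (Subtype.val : {a : B // IsAtom a} → B) = ⊤ := by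
  let _ := Fintype.ofFinite B
  let _ := Fintype.toCompleteAtomicBooleanAlgebra B
  rw [Finset.sup_univ_eq_iSup, ← sSup_range, Subtype.range_coe_subtype]
  exact sSup_atoms_eq_top

namespace BoundedLatticeHom

variable {β : Type*} [CompleteLattice β] (φ : BoundedLatticeHom B β)

theorem iSup_map_atoms_eq_top : ⨆ a : {a : B // IsAtom a}, φ a = ⊤ := by
  let _ := Fintype.ofFinite {a : B // IsAtom a}
  rw [← map_top φ, ← Finset.sup_univ_atoms_eq_top, map_finset_sup, Finset.sup_univ_eq_iSup]
  rfl

theorem range_eq_range_iSup_atoms :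
    Set.range φ = Set.range fun S : Set {a : B // IsAtom a} => ⨆ a ∈ S, φ a := by
  classical
  let _ := Fintype.ofFinite B
  let _ := Fintype.toCompleteAtomicBooleanAlgebra B
  rw [← CompleteAtomicBooleanAlgebra.toSetOfIsAtom.symm.surjective.range_comp]
  congr 1
  funext S
  change φ (sSup (Subtype.val '' S)) = _
  rw [← Set.coe_toFinset (Subtype.val '' S), ← Finset.sup_id_eq_sSup, map_finset_sup,
    Finset.sup_eq_iSup]
  simp only [Set.mem_toFinset, iSup_image, Function.comp_id]

end BoundedLatticeHom

end FiniteBooleanAlgebra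

namespace BoundedLatticeHom

variable {B K V : Type*} [Field K] [AddCommGroup V] [Module K V] [FiniteDimensional K V]

theorem finrank_map_sup_of_disjoint [Lattice B] [BoundedOrder B]
    (φ : BoundedLatticeHom B (Submodule K V)) {x y : B} (h : Disjoint x y) :
    finrank K (φ (x ⊔ y)) = finrank K (φ x) + finrank K (φ y) := by
  have := Submodule.finrank_sup_add_finrank_inf_eq (φ x) (φ y)
  rwa [← map_sup, ← map_inf, h.eq_bot, map_bot, finrank_bot, add_zero] at this

theorem one_le_finrank_map_atom [Lattice B] [BoundedOrder B]
    (φ : BoundedLatticeHom B (Submodule K V)) (hφ : Function.Injective φ)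
    (a : {a : B // IsAtom a}) : 1 ≤ finrank K (φ a) :=
  Submodule.one_le_finrank_iff.2 <| (hφ.ne_iff' (map_bot φ)).2 a.2.1

theorem finrank_map_finset_sup_atoms [DistribLattice B] [BoundedOrder B]
    (φ : BoundedLatticeHom B (Submodule K V)) (s : Finset {a : B // IsAtom a}) :
    finrank K (φ (s.sup Subtype.val)) = ∑ a ∈ s, finrank K (φ a) := by
  classical
  induction s using Finset.induction_on with
  | empty => simp
  | insert a s ha ih =>
    have hdisj : Disjoint (a : B) (s.sup Subtype.val) := Finset.disjoint_sup_right.2 fun b hb =>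
      a.2.disjoint_of_ne b.2 fun h => ha (Subtype.ext h ▸ hb)
    rw [Finset.sup_insert, φ.finrank_map_sup_of_disjoint hdisj, Finset.sum_insert ha, ih]

variable [BooleanAlgebra B] [Finite B] (φ : BoundedLatticeHom B (Submodule K V))

theorem sum_finrank_map_atoms [Fintype {a : B // IsAtom a}] :
    ∑ a : {a : B // IsAtom a}, finrank K (φ a) = finrank K V := by
  rw [← finrank_map_finset_sup_atoms, Finset.sup_univ_atoms_eq_top, map_top, finrank_top]

theorem card_atoms_le_finrank (hφ : Function.Injective φ) :
    Nat.card {a : B // IsAtom a} ≤ finrank K V := by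
  let _ := Fintype.ofFinite {a : B // IsAtom a}
  calc Nat.card {a : B // IsAtom a} = ∑ _a : {a : B // IsAtom a}, 1 := by simp
    _ ≤ ∑ a : {a : B // IsAtom a}, finrank K (φ a) :=
      Finset.sum_le_sum fun a _ => φ.one_le_finrank_map_atom hφ a
    _ = finrank K V := φ.sum_finrank_map_atoms

theorem card_le_two_pow_finrank (hφ : Function.Injective φ) : Nat.card B ≤ 2 ^ finrank K V :=
  card_eq_two_pow_card_atoms (B := B) ▸ Nat.pow_le_pow_right two_pos (φ.card_atoms_le_finrank hφ)

theorem finrank_map_atom_eq_one (hφ : Function.Injective φ) (h : Nat.card B = 2 ^ finrank K V)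
    (a : {a : B // IsAtom a}) : finrank K (φ a) = 1 := by
  let _ := Fintype.ofFinite {a : B // IsAtom a}
  have hsum : ∑ _a : {a : B // IsAtom a}, 1 = ∑ a : {a : B // IsAtom a}, finrank K (φ a) := by
    rw [φ.sum_finrank_map_atoms, ← card_atoms_eq_of_card_eq_two_pow h]
    simp
  exact ((Finset.sum_eq_sum_iff_of_le fun a _ => φ.one_le_finrank_map_atom hφ a).1 hsum a
    (Finset.mem_univ a)).symm

theorem exists_basis_range_eq_range_span_image (hφ : Function.Injective φ)
    (h : Nat.card B = 2 ^ finrank K V) :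
    ∃ e : Basis (Fin (finrank K V)) K V,
      Set.range φ = Set.range fun I : Set (Fin (finrank K V)) => Submodule.span K (e '' I) := by
  have hline (a : {a : B // IsAtom a}) : ∃ v, φ a = K ∙ v := by
    obtain ⟨v, hv, hv0⟩ := (Submodule.ne_bot_iff _).1 ((hφ.ne_iff' (map_bot φ)).2 a.2.1)
    exact ⟨v, eq_span_singleton_of_mem_of_finrank_eq_one (φ.finrank_map_atom_eq_one hφ h a) hv hv0⟩
  choose v hv using hline
  let σ := (Finite.equivFinOfCardEq (card_atoms_eq_of_card_eq_two_pow h)).symm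
  have hspan : ⊤ ≤ Submodule.span K (Set.range (v ∘ σ)) := by
    rw [σ.surjective.range_comp, Submodule.span_range_eq_iSup, ← φ.iSup_map_atoms_eq_top]
    simp only [hv, le_rfl]
  refine ⟨basisOfTopLeSpanOfCardEqFinrank (v ∘ σ) hspan (by simp), ?_⟩
  rw [coe_basisOfTopLeSpanOfCardEqFinrank, φ.range_eq_range_iSup_atoms,
    ← (Set.image_surjective.2 σ.surjective).range_comp]
  congr 1
  funext I
  rw [Function.comp_apply, Set.image_comp, Set.image_eq_iUnion v, Submodule.span_iUnion₂]
  simp only [hv]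

theorem card_eq_two_pow_finrank_iff (hφ : Function.Injective φ) :
    Nat.card B = 2 ^ finrank K V ↔ ∃ e : Basis (Fin (finrank K V)) K V,
      Set.range φ = Set.range fun I : Set (Fin (finrank K V)) => Submodule.span K (e '' I) := by
  refine ⟨φ.exists_basis_range_eq_range_span_image hφ, fun ⟨e, he⟩ => ?_⟩
  rw [← Nat.card_range_of_injective hφ, he, e.card_range_span_image, Nat.card_fin]

end BoundedLatticeHom

theorem IsComplementFun.exists_isCompl {F V : Type*} [Field F] [AddCommGroup V] [Module F V]
    {n : ℕ} {U : Set (Submodule F V)} {f : U → U} (hf : IsComplementFun n U f) ⦃X : Submodule F V⦄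
    (hX : X ∈ U) : ∃ Y, Y ∈ U ∧ IsCompl X Y :=
  ⟨f ⟨X, hX⟩, (f ⟨X, hX⟩).2, .of_eq (hf.1 ⟨X, hX⟩).1 (hf.1 ⟨X, hX⟩).2⟩

theorem distrib_sublattice_with_complement_card_general
    (n : ℕ)
    (F V : Type*) [Field F] [Fintype F]
    [AddCommGroup V] [Module F V] [FiniteDimensional F V] (hV : finrank F V = n)
    (U : Set (Submodule F V))
    (hjoin : ∀ X ∈ U, ∀ Y ∈ U, X ⊔ Y ∈ U)
    (hmeet : ∀ X ∈ U, ∀ Y ∈ U, X ⊓ Y ∈ U)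
    (hdist : ∀ X ∈ U, ∀ Y ∈ U, ∀ Z ∈ U, X ⊔ (Y ⊓ Z) = (X ⊔ Y) ⊓ (X ⊔ Z))
    (f : U → U) (hf : IsComplementFun n U f) :
    U.ncard ≤ 2 ^ n ∧
      (U.ncard = 2 ^ n ↔ ∃ e : Basis (Fin n) F V,
        U = {W : Submodule F V | ∃ I : Set (Fin n), W = Submodule.span F (e '' I)}) := by
  subst hV
  rcases U.eq_empty_or_nonempty with rfl | ⟨X, hX⟩
  · refine ⟨by simp, iff_of_false (Set.ncard_empty _ ▸ (pow_pos two_pos _).ne) fun ⟨e, he⟩ => ?_⟩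
    exact (he ▸ ⟨∅, rfl⟩ : Submodule.span F (e '' ∅) ∈ (∅ : Set (Submodule F V)))
  obtain ⟨Y, hY, hXY⟩ := hf.exists_isCompl hX
  have hbot : ⊥ ∈ U := hXY.inf_eq_bot ▸ hmeet X hX Y hY
  have htop : ⊤ ∈ U := hXY.sup_eq_top ▸ hjoin X hX Y hY
  have hsup : ∀ ⦃X Y⦄, X ∈ U → Y ∈ U → X ⊔ Y ∈ U := fun X Y hX hY => hjoin X hX Y hY
  have hinf : ∀ ⦃X Y⦄, X ∈ U → Y ∈ U → X ⊓ Y ∈ U := fun X Y hX hY => hmeet X hX Y hY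
  let _ : BooleanAlgebra U := Subtype.booleanAlgebra hbot htop hsup hinf
    (fun X Y Z hX hY hZ => (hdist X hX Y hY Z hZ).ge) hf.exists_isCompl
  have : Finite V := Module.finite_of_finite F
  have : Finite (Submodule F V) := Finite.of_injective _ SetLike.coe_injective
  let φ := BoundedLatticeHom.subtypeVal hbot htop hsup hinf
  have hφ : Function.Injective φ := Subtype.val_injective
  have hrange : Set.range φ = U := Subtype.range_coe
  rw [← Nat.card_coe_set_eq]
  refine ⟨φ.card_le_two_pow_finrank hφ,
    (φ.card_eq_two_pow_finrank_iff hφ).trans (exists_congr fun e => ?_)⟩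
  rw [hrange]
  simp only [Set.range, eq_comm]

/-- If `U ⊆ P_q(n)` is a distributive sublattice of the linear lattice
(closed under subspace sum and intersection, satisfying the distributive law) on which
a complement function is defined, then `|U| ≤ 2 ^ n`, with equality iff `U` is a code
derived from a fixed basis `e₁, …, e_n` of `F_q^n`, i.e.
`U = { span {e_i : i ∈ I} : I ⊆ {1, …, n} }`. -/
theorem distrib_sublattice_with_complement_card
    (q n : ℕ) (hq : IsPrimePow q) (hn : 0 < n)
    (F V : Type*) [Field F] [Fintype F] (hF : Fintype.card F = q)
    [AddCommGroup V] [Module F V] [FiniteDimensional F V] (hV : finrank F V = n)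
    (U : Set (Submodule F V))
    (hjoin : ∀ X ∈ U, ∀ Y ∈ U, X ⊔ Y ∈ U)
    (hmeet : ∀ X ∈ U, ∀ Y ∈ U, X ⊓ Y ∈ U)
    (hdist : ∀ X ∈ U, ∀ Y ∈ U, ∀ Z ∈ U, X ⊔ (Y ⊓ Z) = (X ⊔ Y) ⊓ (X ⊔ Z))
    (f : U → U) (hf : IsComplementFun n U f) :
    U.ncard ≤ 2 ^ n ∧
      (U.ncard = 2 ^ n ↔ ∃ e : Basis (Fin n) F V,
        U = {W : Submodule F V | ∃ I : Set (Fin n), W = Submodule.span F (e '' I)}) :=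
  distrib_sublattice_with_complement_card_general n F V hV U hjoin hmeet hdist f hf
end

section
/- Let q be a prime power and n a positive integer. The maximum size of a linear code in P_q(n) that is closed under intersection is 2^n, and a linear code closed under intersection has size 2^n if and only if it is a code derived from a fixed basis, i.e., of the form { span{e_i : i ∈ I} : I ⊆ {1, …, n} } for some basis {e₁, …, e_n} of F_q^n. -/
open Module

namespace MaxLinearCode

variable {F V : Type*} [Field F] [AddCommGroup V] [Module F V]

structure CodeData (U : Set (Submodule F V)) where
  h0 : ⊥ ∈ U
  op : U → U → U
  comm : ∀ X Y, op X Y = op Y X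
  assoc : ∀ X Y Z, op (op X Y) Z = op X (op Y Z)
  id : ∀ X, op X ⟨⊥, h0⟩ = X
  inv : ∀ X, op X X = ⟨⊥, h0⟩
  dist : ∀ X Y W, subspaceDist (op X W : Submodule F V) (op Y W : Submodule F V)
           = subspaceDist (X : Submodule F V) (Y : Submodule F V)
  inter : ∀ X Y : U, ((X : Submodule F V) ⊓ (Y : Submodule F V)) ∈ U

variable {U : Set (Submodule F V)} (D : CodeData U)

lemma dist_bot [FiniteDimensional F V] (Z : Submodule F V) :
    subspaceDist Z ⊥ = finrank F Z := by
  rw [subspaceDist, sup_bot_eq, inf_bot_eq, finrank_bot]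
  omega

lemma cancel {X Y W : U} (h : D.op X W = D.op Y W) : X = Y := by
  have hX : D.op (D.op X W) W = X := by rw [D.assoc, D.inv, D.id]
  have hY : D.op (D.op Y W) W = Y := by rw [D.assoc, D.inv, D.id]
  rw [← hX, h, hY]

variable [FiniteDimensional F V]

lemma rank_op (X Y : U) :
    finrank F (D.op X Y : Submodule F V) + finrank F ↥((X : Submodule F V) ⊓ Y) =
      finrank F ↥((X : Submodule F V) ⊔ Y) := by
  have h := D.dist X Y Y
  rw [D.inv] at h
  have h2 : subspaceDist (D.op X Y : Submodule F V) ⊥ = subspaceDist (X : Submodule F V) Y := h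
  rw [dist_bot] at h2
  have hle : finrank F ↥((X : Submodule F V) ⊓ Y) ≤ finrank F ↥((X : Submodule F V) ⊔ Y) :=
    Submodule.finrank_mono inf_le_sup
  unfold subspaceDist at h2
  omega

lemma dist_op_fst (X Y : U) :
    subspaceDist (D.op X Y : Submodule F V) (X : Submodule F V) = finrank F (Y : Submodule F V) := by
  have h := D.dist Y ⟨⊥, D.h0⟩ X
  have e1 : D.op ⟨⊥, D.h0⟩ X = X := by rw [D.comm, D.id]
  rw [e1, D.comm Y X] at h
  have h2 : subspaceDist (D.op X Y : Submodule F V) (X : Submodule F V)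
      = subspaceDist (Y : Submodule F V) ⊥ := h
  rwa [dist_bot] at h2

lemma disjoint_op (X Y : U) (h : (X : Submodule F V) ⊓ Y = ⊥) :
    (D.op X Y : Submodule F V) = (X : Submodule F V) ⊔ Y := by
  have hr := rank_op D X Y
  rw [h, finrank_bot] at hr
  have mod2 : finrank F ↥((X : Submodule F V) ⊔ Y) + finrank F ↥((X : Submodule F V) ⊓ Y) =
      finrank F (X : Submodule F V) + finrank F (Y : Submodule F V) :=
    Submodule.finrank_sup_add_finrank_inf_eq _ _
  rw [h, finrank_bot] at mod2
  -- distance to X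
  have hdX := dist_op_fst D X Y
  unfold subspaceDist at hdX
  have modX : finrank F ↥((D.op X Y : Submodule F V) ⊔ X) +
      finrank F ↥((D.op X Y : Submodule F V) ⊓ X) =
      finrank F (D.op X Y : Submodule F V) + finrank F (X : Submodule F V) :=
    Submodule.finrank_sup_add_finrank_inf_eq _ _
  have hmX : finrank F ↥((D.op X Y : Submodule F V) ⊓ X) ≤
      finrank F ↥((D.op X Y : Submodule F V) ⊔ X) := Submodule.finrank_mono inf_le_sup
  have hiX : finrank F ↥((D.op X Y : Submodule F V) ⊓ X) = finrank F (X : Submodule F V) := by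
    omega
  have hXle : (X : Submodule F V) ≤ (D.op X Y : Submodule F V) := by
    have := Submodule.eq_of_le_of_finrank_le (inf_le_right :
      (D.op X Y : Submodule F V) ⊓ X ≤ X) (le_of_eq hiX.symm)
    rw [← this]; exact inf_le_left
  -- distance to Y
  have hdY := dist_op_fst D Y X
  rw [D.comm Y X] at hdY
  unfold subspaceDist at hdY
  have modY : finrank F ↥((D.op X Y : Submodule F V) ⊔ Y) +
      finrank F ↥((D.op X Y : Submodule F V) ⊓ Y) =
      finrank F (D.op X Y : Submodule F V) + finrank F (Y : Submodule F V) :=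
    Submodule.finrank_sup_add_finrank_inf_eq _ _
  have hmY : finrank F ↥((D.op X Y : Submodule F V) ⊓ Y) ≤
      finrank F ↥((D.op X Y : Submodule F V) ⊔ Y) := Submodule.finrank_mono inf_le_sup
  have hiY : finrank F ↥((D.op X Y : Submodule F V) ⊓ Y) = finrank F (Y : Submodule F V) := by
    omega
  have hYle : (Y : Submodule F V) ≤ (D.op X Y : Submodule F V) := by
    have := Submodule.eq_of_le_of_finrank_le (inf_le_right :
      (D.op X Y : Submodule F V) ⊓ Y ≤ Y) (le_of_eq hiY.symm)
    rw [← this]; exact inf_le_left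
  exact (Submodule.eq_of_le_of_finrank_le (sup_le hXle hYle) (by omega)).symm

lemma compl_op (X Y : U) (h : (X : Submodule F V) ≤ Y) :
    (D.op X Y : Submodule F V) ⊓ X = ⊥ ∧ (D.op X Y : Submodule F V) ≤ Y ∧
    (D.op X Y : Submodule F V) ⊔ X = Y ∧
    finrank F (D.op X Y : Submodule F V) + finrank F (X : Submodule F V) =
      finrank F (Y : Submodule F V) := by
  have hr := rank_op D X Y
  rw [inf_eq_left.2 h, sup_eq_right.2 h] at hr
  -- distance to X
  have hdX := dist_op_fst D X Y
  unfold subspaceDist at hdX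
  have modX : finrank F ↥((D.op X Y : Submodule F V) ⊔ X) +
      finrank F ↥((D.op X Y : Submodule F V) ⊓ X) =
      finrank F (D.op X Y : Submodule F V) + finrank F (X : Submodule F V) :=
    Submodule.finrank_sup_add_finrank_inf_eq _ _
  have hmX : finrank F ↥((D.op X Y : Submodule F V) ⊓ X) ≤
      finrank F ↥((D.op X Y : Submodule F V) ⊔ X) := Submodule.finrank_mono inf_le_sup
  have h0 : finrank F ↥((D.op X Y : Submodule F V) ⊓ X) = 0 := by omega
  have hbot : (D.op X Y : Submodule F V) ⊓ X = ⊥ := Submodule.finrank_eq_zero.1 h0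
  -- distance to Y
  have hdY := dist_op_fst D Y X
  rw [D.comm Y X] at hdY
  unfold subspaceDist at hdY
  have modY : finrank F ↥((D.op X Y : Submodule F V) ⊔ Y) +
      finrank F ↥((D.op X Y : Submodule F V) ⊓ Y) =
      finrank F (D.op X Y : Submodule F V) + finrank F (Y : Submodule F V) :=
    Submodule.finrank_sup_add_finrank_inf_eq _ _
  have hmY : finrank F ↥((D.op X Y : Submodule F V) ⊓ Y) ≤
      finrank F ↥((D.op X Y : Submodule F V) ⊔ Y) := Submodule.finrank_mono inf_le_sup
  have hge : finrank F (Y : Submodule F V) ≤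
      finrank F ↥((D.op X Y : Submodule F V) ⊔ Y) := Submodule.finrank_mono le_sup_right
  have hsupY : finrank F ↥((D.op X Y : Submodule F V) ⊔ Y) =
      finrank F (Y : Submodule F V) := by omega
  have hZle : (D.op X Y : Submodule F V) ≤ Y := by
    have := Submodule.eq_of_le_of_finrank_le (le_sup_right :
      (Y : Submodule F V) ≤ (D.op X Y : Submodule F V) ⊔ Y) (le_of_eq hsupY)
    rw [this]; exact le_sup_left
  refine ⟨hbot, hZle, ?_, hr⟩
  refine Submodule.eq_of_le_of_finrank_le (sup_le hZle h) ?_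
  have : finrank F ↥((D.op X Y : Submodule F V) ⊔ X) = finrank F (Y : Submodule F V) := by omega
  omega

def IsAtomOf (U : Set (Submodule F V)) (A : Submodule F V) : Prop :=
  A ∈ U ∧ A ≠ ⊥ ∧ ∀ B ∈ U, B ≤ A → B = ⊥ ∨ B = A

lemma atom_rank_pos {A : Submodule F V} (hA : IsAtomOf U A) : 0 < finrank F A :=
  Nat.pos_of_ne_zero fun h => hA.2.1 (Submodule.finrank_eq_zero.1 h)

include D in
lemma atom_inf {A B : U} (hA : IsAtomOf U (A : Submodule F V))
    (hB : IsAtomOf U (B : Submodule F V)) (hne : (A : Submodule F V) ≠ B) :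
    (A : Submodule F V) ⊓ B = ⊥ := by
  rcases hA.2.2 _ (D.inter A B) inf_le_left with h | h
  · exact h
  · have hAB : (A : Submodule F V) ≤ B := h ▸ inf_le_right
    rcases hB.2.2 _ A.2 hAB with h2 | h2
    · exact absurd h2 hA.2.1
    · exact absurd h2 hne

lemma exists_atom_le : ∀ k (X : Submodule F V), finrank F X ≤ k → X ∈ U → X ≠ ⊥ →
    ∃ A, IsAtomOf U A ∧ A ≤ X := by
  intro k
  induction k with
  | zero =>
    intro X h hXU hne
    exact absurd (Submodule.finrank_eq_zero.1 (Nat.le_zero.1 h)) hne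
  | succ k ih =>
    intro X h hXU hne
    by_cases hA : ∀ B ∈ U, B ≤ X → B = ⊥ ∨ B = X
    · exact ⟨X, ⟨hXU, hne, hA⟩, le_rfl⟩
    · push_neg at hA
      obtain ⟨B, hBU, hBle, hB0, hBX⟩ := hA
      have hlt : finrank F B < finrank F X :=
        Submodule.finrank_lt_finrank_of_lt (lt_of_le_of_ne hBle hBX)
      obtain ⟨A, hA, hle⟩ := ih B (by omega) hBU hB0
      exact ⟨A, hA, hle.trans hBle⟩

def CodeData.fold (D : CodeData U) (s : Finset U) : U :=
  Finset.fold (op := D.op) (hc := ⟨D.comm⟩) (ha := ⟨D.assoc⟩) ⟨⊥, D.h0⟩ (fun X => X) s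

include D in
lemma fold_empty : D.fold ∅ = ⟨⊥, D.h0⟩ := by simp [CodeData.fold]

lemma fold_insert [DecidableEq U] {A : U} {s : Finset U} (h : A ∉ s) :
    D.fold (insert A s) = D.op A (D.fold s) := by
  simpa [CodeData.fold] using Finset.fold_insert (op := D.op) (hc := ⟨D.comm⟩)
    (ha := ⟨D.assoc⟩) (b := (⟨⊥, D.h0⟩ : U)) (f := fun X => X) h

lemma fold_mem (s : Finset U) : (D.fold s : Submodule F V) ∈ U := (D.fold s).2

include D in
lemma fold_sup [DecidableEq U] : ∀ s : Finset U, (∀ A ∈ s, IsAtomOf U (A : Submodule F V)) →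
    (D.fold s : Submodule F V) = s.sup (fun A => (A : Submodule F V)) ∧
    finrank F ↥(s.sup (fun A => (A : Submodule F V))) =
      ∑ A ∈ s, finrank F (A : Submodule F V) ∧
    ∀ A : U, IsAtomOf U (A : Submodule F V) → A ∉ s →
      (A : Submodule F V) ⊓ s.sup (fun A => (A : Submodule F V)) = ⊥ := by
  intro s
  induction s using Finset.induction_on with
  | empty =>
    intro _
    refine ⟨by simp [CodeData.fold], by simp, fun A _ _ => by simp⟩
  | insert _ _ hB =>
    rename_i B s ih
    intro hatoms
    have hBatom : IsAtomOf U (B : Submodule F V) := hatoms B (Finset.mem_insert_self B s)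
    have hsatoms : ∀ A ∈ s, IsAtomOf U (A : Submodule F V) :=
      fun A hA => hatoms A (Finset.mem_insert_of_mem hA)
    obtain ⟨ihfold, ihrank, ihdisj⟩ := ih hsatoms
    set W := s.sup (fun A => (A : Submodule F V)) with hW
    have hBW : (B : Submodule F V) ⊓ W = ⊥ := ihdisj B hBatom hB
    have hWmem : W ∈ U := ihfold ▸ (D.fold s).2
    have hfold1 : (D.fold (insert B s) : Submodule F V) = (B : Submodule F V) ⊔ W := by
      rw [fold_insert D hB]
      rw [show D.op B (D.fold s) = D.op B ⟨W, hWmem⟩ by congr 1; exact Subtype.ext ihfold]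
      exact disjoint_op D B ⟨W, hWmem⟩ hBW
    have hsup : (insert B s).sup (fun A => (A : Submodule F V)) = (B : Submodule F V) ⊔ W := by
      rw [Finset.sup_insert]
    have hmod : finrank F ↥((B : Submodule F V) ⊔ W) + finrank F ↥((B : Submodule F V) ⊓ W) =
        finrank F (B : Submodule F V) + finrank F ↥W :=
      Submodule.finrank_sup_add_finrank_inf_eq _ _
    rw [hBW, finrank_bot] at hmod
    have hrank : finrank F ↥((insert B s).sup (fun A => (A : Submodule F V))) =
        ∑ A ∈ insert B s, finrank F (A : Submodule F V) := by
      rw [hsup, Finset.sum_insert hB, ← ihrank]; omega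
    refine ⟨by rw [hfold1, hsup], hrank, ?_⟩
    intro A hAatom hAmem
    rw [hsup]
    have hAB : A ≠ B := fun h => hAmem (h ▸ Finset.mem_insert_self B s)
    have hAs : A ∉ s := fun h => hAmem (Finset.mem_insert_of_mem h)
    have hABv : (A : Submodule F V) ⊓ B = ⊥ :=
      atom_inf D hAatom hBatom (fun h => hAB (Subtype.ext h))
    have hAW : (A : Submodule F V) ⊓ W = ⊥ := ihdisj A hAatom hAs
    -- suppose not bot; then A ≤ B ⊔ W
    have hmem : (A : Submodule F V) ⊓ ((B : Submodule F V) ⊔ W) ∈ U := by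
      have : ((B : Submodule F V) ⊔ W) ∈ U := hfold1 ▸ (D.fold (insert B s)).2
      exact D.inter A ⟨_, this⟩
    rcases hAatom.2.2 _ hmem inf_le_left with h | h
    · exact h
    · exfalso
      have hAle : (A : Submodule F V) ≤ (B : Submodule F V) ⊔ W := h ▸ inf_le_right
      -- X := op A (fold s) has value A ⊔ W
      have hXval : (D.op A (D.fold s) : Submodule F V) = (A : Submodule F V) ⊔ W := by
        rw [show D.fold s = (⟨W, hWmem⟩ : U) from Subtype.ext ihfold]
        exact disjoint_op D A ⟨W, hWmem⟩ hAW
      have hXmem : ((A : Submodule F V) ⊔ W) ∈ U := hXval ▸ (D.op A (D.fold s)).2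
      have hXB := D.inter ⟨_, hXmem⟩ B
      have hXB' : ((A : Submodule F V) ⊔ W) ⊓ (B : Submodule F V) ∈ U := hXB
      rcases hBatom.2.2 _ hXB' inf_le_right with hb | hb
      · have hmod2 : finrank F ↥(((A : Submodule F V) ⊔ W) ⊔ B) +
            finrank F ↥(((A : Submodule F V) ⊔ W) ⊓ B) =
            finrank F ↥((A : Submodule F V) ⊔ W) + finrank F (B : Submodule F V) :=
          Submodule.finrank_sup_add_finrank_inf_eq _ _
        rw [hb, finrank_bot] at hmod2
        have hmod3 : finrank F ↥((A : Submodule F V) ⊔ W) +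
            finrank F ↥((A : Submodule F V) ⊓ W) =
            finrank F (A : Submodule F V) + finrank F ↥W :=
          Submodule.finrank_sup_add_finrank_inf_eq _ _
        rw [hAW, finrank_bot] at hmod3
        have hle2 : (((A : Submodule F V) ⊔ W) ⊔ B) ≤ (B : Submodule F V) ⊔ W :=
          sup_le (sup_le hAle le_sup_right) le_sup_left
        have hle3 : finrank F ↥(((A : Submodule F V) ⊔ W) ⊔ B) ≤
            finrank F ↥((B : Submodule F V) ⊔ W) := Submodule.finrank_mono hle2
        have hfrA : 0 < finrank F (A : Submodule F V) := atom_rank_pos hAatom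
        omega
      · have hBle : (B : Submodule F V) ≤ (A : Submodule F V) ⊔ W := hb ▸ inf_le_left
        have heq : (A : Submodule F V) ⊔ W = (B : Submodule F V) ⊔ W :=
          le_antisymm (sup_le hAle le_sup_right) (sup_le hBle le_sup_right)
        have h1 : D.op A ⟨W, hWmem⟩ = D.op B ⟨W, hWmem⟩ := by
          apply Subtype.ext
          rw [disjoint_op D A ⟨W, hWmem⟩ hAW, disjoint_op D B ⟨W, hWmem⟩ hBW, heq]
        exact hAB (cancel D h1)

include D in
lemma exists_fold [DecidableEq U] : ∀ k (X : U), finrank F (X : Submodule F V) ≤ k →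
    ∃ s : Finset U, (∀ A ∈ s, IsAtomOf U (A : Submodule F V)) ∧ D.fold s = X := by
  intro k
  induction k with
  | zero =>
    intro X h
    have hb : (X : Submodule F V) = ⊥ := Submodule.finrank_eq_zero.1 (Nat.le_zero.1 h)
    exact ⟨∅, by simp, by rw [fold_empty]; exact (Subtype.ext hb).symm⟩
  | succ k ih =>
    intro X h
    by_cases hbot : (X : Submodule F V) = ⊥
    · exact ⟨∅, by simp, by rw [fold_empty]; exact (Subtype.ext hbot).symm⟩
    · obtain ⟨Av, hAatom, hAle⟩ :=
        exists_atom_le (U := U) (finrank F (X : Submodule F V)) _ le_rfl X.2 hbot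
      set A : U := (⟨Av, hAatom.1⟩ : U) with hA
      have hAle' : (A : Submodule F V) ≤ (X : Submodule F V) := hAle
      obtain ⟨hc1, hc2, hc3, hc4⟩ := compl_op D A X hAle'
      set Y := D.op A X with hY
      have hposA : 0 < finrank F (A : Submodule F V) := atom_rank_pos hAatom
      have hfr : finrank F (Y : Submodule F V) ≤ k := by omega
      obtain ⟨s, hs, hfold⟩ := ih Y hfr
      have hAnots : A ∉ s := by
        intro hmem
        have hAleY : (A : Submodule F V) ≤ (Y : Submodule F V) := by
          rw [← hfold, (fold_sup D s hs).1]
          exact Finset.le_sup (f := fun A : U => (A : Submodule F V)) hmem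
        have : (A : Submodule F V) = ⊥ := by
          rw [← inf_eq_right.2 hAleY]
          exact hc1
        exact hAatom.2.1 this
      refine ⟨insert A s, ?_, ?_⟩
      · intro C hC
        rcases Finset.mem_insert.1 hC with h | h
        · rw [h]; exact hAatom
        · exact hs C h
      · rw [fold_insert D hAnots, hfold, hY, ← D.assoc, D.inv, D.comm, D.id]

lemma key [Fintype F] {U : Set (Submodule F V)} (D : CodeData U) :
    U.ncard ≤ 2 ^ (finrank F V) ∧
    (U.ncard = 2 ^ (finrank F V) →
      ∃ e : Basis (Fin (finrank F V)) F V,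
        U = {W : Submodule F V |
          ∃ I : Set (Fin (finrank F V)), W = Submodule.span F (e '' I)}) := by
  classical
  haveI hfinV : Finite V := Module.finite_of_finite F
  haveI hfinSub : Finite (Submodule F V) := Finite.of_injective _ SetLike.coe_injective
  haveI : Finite ↥U := Subtype.finite
  haveI := Fintype.ofFinite ↥U
  set n := finrank F V with hn
  set 𝒜 : Finset ↥U := Finset.univ.filter (fun A => IsAtomOf U (A : Submodule F V)) with h𝒜
  have hatoms : ∀ A ∈ 𝒜, IsAtomOf U (A : Submodule F V) := fun A hA => (Finset.mem_filter.1 hA).2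
  obtain ⟨hfold𝒜, hrank𝒜, -⟩ := fold_sup D 𝒜 hatoms
  have hsum_le : ∑ A ∈ 𝒜, finrank F (A : Submodule F V) ≤ n := by
    rw [← hrank𝒜]; exact Submodule.finrank_le _
  have hcard_le_sum : 𝒜.card ≤ ∑ A ∈ 𝒜, finrank F (A : Submodule F V) := by
    rw [Finset.card_eq_sum_ones]
    exact Finset.sum_le_sum (fun A hA => atom_rank_pos (hatoms A hA))
  have hm : 𝒜.card ≤ n := le_trans hcard_le_sum hsum_le
  have hsurj : Set.SurjOn D.fold ↑𝒜.powerset ↑(Finset.univ : Finset ↥U) := by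
    intro X _
    obtain ⟨s, hs, hfold⟩ := exists_fold D (finrank F (X : Submodule F V)) X le_rfl
    refine ⟨s, ?_, hfold⟩
    refine Finset.mem_coe.2 (Finset.mem_powerset.2 ?_)
    intro A hA
    exact Finset.mem_filter.2 ⟨Finset.mem_univ A, hs A hA⟩
  have hcards := Finset.card_le_card_of_surjOn D.fold hsurj
  rw [Finset.card_powerset, Finset.card_univ] at hcards
  have hUcard : U.ncard = Fintype.card ↥U := by
    rw [← Nat.card_eq_fintype_card, Nat.card_coe_set_eq]
  constructor
  · rw [hUcard]
    exact le_trans hcards (Nat.pow_le_pow_right (by norm_num) hm)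
  · intro heq
    have h2 : (2 : ℕ) ^ n ≤ 2 ^ 𝒜.card := by
      rw [← heq, hUcard]; exact hcards
    have hmn : 𝒜.card = n :=
      le_antisymm hm ((Nat.pow_le_pow_iff_right (by norm_num)).1 h2)
    have hrk1 : ∀ A ∈ 𝒜, finrank F (A : Submodule F V) = 1 := by
      by_contra hc
      push_neg at hc
      obtain ⟨A0, hA0, hne⟩ := hc
      have hlt : ∑ A ∈ 𝒜, (1 : ℕ) < ∑ A ∈ 𝒜, finrank F (A : Submodule F V) :=
        Finset.sum_lt_sum (fun A hA => atom_rank_pos (hatoms A hA))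
          ⟨A0, hA0, lt_of_le_of_ne (atom_rank_pos (hatoms A0 hA0)) (Ne.symm hne)⟩
      rw [← Finset.card_eq_sum_ones, hmn] at hlt
      omega
    have hsum_eq : ∑ A ∈ 𝒜, finrank F (A : Submodule F V) = n := by
      rw [Finset.sum_congr rfl hrk1, Finset.sum_const, smul_eq_mul, mul_one, hmn]
    have htop : 𝒜.sup (fun A : ↥U => (A : Submodule F V)) = ⊤ :=
      Submodule.eq_top_of_finrank_eq (by rw [hrank𝒜, hsum_eq])
    have hvec : ∀ A : {x // x ∈ 𝒜}, ∃ w : V, w ≠ 0 ∧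
        ((A.1 : ↥U) : Submodule F V) = Submodule.span F {w} := by
      intro A
      have h1 : finrank F ((A.1 : ↥U) : Submodule F V) = 1 := hrk1 A.1 A.2
      obtain ⟨w, hwmem, hw0⟩ : ∃ w ∈ ((A.1 : ↥U) : Submodule F V), w ≠ 0 := by
        by_contra hcon
        push_neg at hcon
        have hb : ((A.1 : ↥U) : Submodule F V) = ⊥ := by
          rw [Submodule.eq_bot_iff]; exact hcon
        rw [hb, finrank_bot] at h1
        omega
      refine ⟨w, hw0, ?_⟩
      have hle : Submodule.span F {w} ≤ ((A.1 : ↥U) : Submodule F V) := by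
        rw [Submodule.span_le, Set.singleton_subset_iff]; exact hwmem
      exact (Submodule.eq_of_le_of_finrank_le hle
        (by rw [finrank_span_singleton hw0, h1])).symm
    choose v hv0 hvspan using hvec
    have hcard𝒜 : Fintype.card {x // x ∈ 𝒜} = n := by rw [Fintype.card_coe, hmn]
    let ψ : Fin n ≃ {x // x ∈ 𝒜} := (Fintype.equivFinOfCardEq hcard𝒜).symm
    let e0 : Fin n → V := fun i => v (ψ i)
    have hspan_top : ⊤ ≤ Submodule.span F (Set.range e0) := by
      rw [← htop]
      refine Finset.sup_le ?_
      intro A hA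
      rw [hvspan ⟨A, hA⟩]
      refine Submodule.span_le.2 ?_
      rw [Set.singleton_subset_iff]
      refine Submodule.subset_span ⟨ψ.symm ⟨A, hA⟩, ?_⟩
      simp [e0]
    have hcardfin : Fintype.card (Fin n) = finrank F V := by simp [hn]
    set e : Basis (Fin n) F V := basisOfTopLeSpanOfCardEqFinrank e0 hspan_top hcardfin with he
    have hbe : ∀ i, e i = e0 i := fun i => by
      rw [he, coe_basisOfTopLeSpanOfCardEqFinrank]
    have hspan_eq : ∀ I : Set (Fin n),
        Submodule.span F (e '' I) = ⨆ i ∈ I, (((ψ i).1 : ↥U) : Submodule F V) := by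
      intro I
      apply le_antisymm
      · refine Submodule.span_le.2 ?_
        rintro x ⟨i, hi, rfl⟩
        have hle : (((ψ i).1 : ↥U) : Submodule F V) ≤
            ⨆ i ∈ I, (((ψ i).1 : ↥U) : Submodule F V) :=
          le_iSup₂_of_le i hi le_rfl
        refine hle ?_
        show e i ∈ (((ψ i).1 : ↥U) : Submodule F V)
        rw [hvspan (ψ i), hbe i]
        exact Submodule.mem_span_singleton_self _
      · refine iSup₂_le ?_
        intro i hi
        rw [hvspan (ψ i)]
        refine Submodule.span_le.2 ?_
        rw [Set.singleton_subset_iff]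
        exact Submodule.subset_span ⟨i, hi, hbe i⟩
    refine ⟨e, ?_⟩
    ext Wv
    simp only [Set.mem_setOf_eq]
    constructor
    · intro hW
      obtain ⟨s, hs, hfold⟩ := exists_fold D (finrank F Wv) ⟨Wv, hW⟩ le_rfl
      refine ⟨{i | ((ψ i).1 : ↥U) ∈ s}, ?_⟩
      rw [hspan_eq]
      have h1 : Wv = s.sup (fun A : ↥U => (A : Submodule F V)) := by
        rw [← (fold_sup D s hs).1, hfold]
      rw [h1]
      apply le_antisymm
      · refine Finset.sup_le ?_
        intro A hAs
        have hA𝒜 : A ∈ 𝒜 := Finset.mem_filter.2 ⟨Finset.mem_univ A, hs A hAs⟩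
        have h2 : ((ψ (ψ.symm ⟨A, hA𝒜⟩)).1 : ↥U) = A := by rw [Equiv.apply_symm_apply]
        have h3 : ψ.symm ⟨A, hA𝒜⟩ ∈ {i | ((ψ i).1 : ↥U) ∈ s} := by
          show ((ψ (ψ.symm ⟨A, hA𝒜⟩)).1 : ↥U) ∈ s
          rw [h2]; exact hAs
        refine le_trans ?_ (le_iSup₂_of_le (ψ.symm ⟨A, hA𝒜⟩) h3 le_rfl)
        rw [h2]
      · refine iSup₂_le ?_
        intro i hi
        exact Finset.le_sup (f := fun A : ↥U => (A : Submodule F V)) hi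
    · rintro ⟨I, rfl⟩
      rw [hspan_eq I]
      have hts : ∀ A ∈ Finset.univ.filter
          (fun A : ↥U => ∃ i ∈ I, ((ψ i).1 : ↥U) = A), IsAtomOf U (A : Submodule F V) := by
        intro A hA
        obtain ⟨-, i, hi, rfl⟩ := Finset.mem_filter.1 hA
        exact hatoms _ (ψ i).2
      have hsup_t : (Finset.univ.filter
          (fun A : ↥U => ∃ i ∈ I, ((ψ i).1 : ↥U) = A)).sup (fun A : ↥U => (A : Submodule F V)) =
          ⨆ i ∈ I, (((ψ i).1 : ↥U) : Submodule F V) := by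
        apply le_antisymm
        · refine Finset.sup_le ?_
          intro A hA
          obtain ⟨-, i, hi, rfl⟩ := Finset.mem_filter.1 hA
          exact le_iSup₂_of_le i hi le_rfl
        · refine iSup₂_le ?_
          intro i hi
          refine Finset.le_sup (f := fun A : ↥U => (A : Submodule F V)) ?_
          exact Finset.mem_filter.2 ⟨Finset.mem_univ _, ⟨i, hi, rfl⟩⟩
      rw [← hsup_t, ← (fold_sup D _ hts).1]
      exact (D.fold _).2

lemma span_code_ncard [Fintype F] {n : ℕ} (e : Basis (Fin n) F V) :
    {W : Submodule F V | ∃ I : Set (Fin n), W = Submodule.span F (e '' I)}.ncard = 2 ^ n := by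
  classical
  have hinj : Function.Injective (fun I : Set (Fin n) => Submodule.span F (e '' I)) := by
    intro I J hIJ
    have hIJ' : Submodule.span F (e '' I) = Submodule.span F (e '' J) := hIJ
    ext i
    constructor
    · intro hi
      have : e i ∈ Submodule.span F (e '' J) := by
        rw [← hIJ']
        exact Submodule.subset_span ⟨i, hi, rfl⟩
      exact e.self_mem_span_image.1 this
    · intro hi
      have : e i ∈ Submodule.span F (e '' I) := by
        rw [hIJ']
        exact Submodule.subset_span ⟨i, hi, rfl⟩
      exact e.self_mem_span_image.1 this
  have hrange : {W : Submodule F V | ∃ I : Set (Fin n), W = Submodule.span F (e '' I)} =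
      Set.range (fun I : Set (Fin n) => Submodule.span F (e '' I)) := by
    ext W
    simp only [Set.mem_setOf_eq, Set.mem_range]
    exact ⟨fun ⟨I, h⟩ => ⟨I, h.symm⟩, fun ⟨I, h⟩ => ⟨I, h.symm⟩⟩
  rw [hrange, ← Nat.card_coe_set_eq, Nat.card_range_of_injective hinj]
  rw [← Nat.card_congr (Fintype.finsetEquivSet (α := Fin n)), Nat.card_eq_fintype_card,
    Fintype.card_finset, Fintype.card_fin]

end MaxLinearCode

/-- The maximum size of a linear code in `P_q(n)` closed under
intersection is `2 ^ n`, and such a code has size `2 ^ n` iff it is a code derived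
from a fixed basis, i.e. of the form `{ span {e_i : i ∈ I} : I ⊆ {1, …, n} }` for
some basis `e₁, …, e_n` of `F_q^n`. -/
theorem max_size_linear_code_closed_inter
    (q n : ℕ) (hq : IsPrimePow q) (hn : 0 < n)
    (F V : Type*) [Field F] [Fintype F] (hF : Fintype.card F = q)
    [AddCommGroup V] [Module F V] [FiniteDimensional F V] (hV : finrank F V = n) :
    (∀ U : Set (Submodule F V), IsLinearCode U → (∀ X ∈ U, ∀ Y ∈ U, X ⊓ Y ∈ U) →
      U.ncard ≤ 2 ^ n) ∧
    (∀ U : Set (Submodule F V), IsLinearCode U → (∀ X ∈ U, ∀ Y ∈ U, X ⊓ Y ∈ U) →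
      (U.ncard = 2 ^ n ↔ ∃ e : Basis (Fin n) F V,
        U = {W : Submodule F V | ∃ I : Set (Fin n), W = Submodule.span F (e '' I)})) := by
  subst hV
  constructor
  · intro U hUl hUi
    obtain ⟨h0, op, hc, ha, hid, hinv, hdist⟩ := hUl
    exact (MaxLinearCode.key ⟨h0, op, hc, ha, hid, hinv, hdist,
      fun X Y => hUi _ X.2 _ Y.2⟩).1
  · intro U hUl hUi
    constructor
    · intro hcard
      obtain ⟨h0, op, hc, ha, hid, hinv, hdist⟩ := hUl
      exact (MaxLinearCode.key ⟨h0, op, hc, ha, hid, hinv, hdist,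
        fun X Y => hUi _ X.2 _ Y.2⟩).2 hcard
    · rintro ⟨e, rfl⟩
      exact MaxLinearCode.span_code_ncard e
end
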